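/- arXiv:2010.11832 — 11 statements merged into one kernel-verified Lean document; each statement's English description precedes it below -/
import Mathlib

section
/- Let G ⊆ H be a dense extension of ordered abelian groups equipped with their natural (archimedean) valuations, and suppose the value set of G has no last element (i.e., for every positive g ∈ G there is a positive c ∈ G with c archimedean-strictly-smaller than g, meaning n·c < g for all n ∈ ℕ). Then for every a ∈ H \ {0} there exists b ∈ G such that a − b is archimedean-strictly-smaller than a (i.e., n·|a − b| < |a| for all n ∈ ℕ). -/
section DenseAddSubgroup

variable {H : Type*} [AddCommGroup H] [LinearOrder H] {G : AddSubgroup H}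

theorem AddSubgroup.exists_pos_mem_forall_nsmul_lt
    (hdense : ∀ a b : H, a < b → ∃ c ∈ G, a < c ∧ c < b)
    (hnolast : ∀ g ∈ G, 0 < g → ∃ c ∈ G, 0 < c ∧ ∀ n : ℕ, n • c < g) {a : H} (ha : 0 < a) :
    ∃ c ∈ G, 0 < c ∧ ∀ n : ℕ, n • c < a := by
  obtain ⟨g, hgG, hg0, hga⟩ := hdense 0 a ha
  obtain ⟨c, hcG, hc0, hcg⟩ := hnolast g hgG hg0
  exact ⟨c, hcG, hc0, fun n => (hcg n).trans hga⟩

variable [IsOrderedAddMonoid H]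

theorem AddSubgroup.exists_mem_abs_sub_lt_of_dense
    (hdense : ∀ a b : H, a < b → ∃ c ∈ G, a < c ∧ c < b) (a : H) {ε : H} (hε : 0 < ε) :
    ∃ b ∈ G, |a - b| < ε := by
  obtain ⟨b, hbG, hab, hba⟩ := hdense (a - ε) a (sub_lt_self a hε)
  refine ⟨b, hbG, ?_⟩
  rw [abs_of_pos (sub_pos.mpr hba)]
  exact sub_lt_comm.mpr hab

end DenseAddSubgroup

/-- Let `G ⊆ H` be a dense extension of ordered abelian groups whose value set (for the
natural/archimedean valuation) has no last element; then for every nonzero `a ∈ H` there is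
`b ∈ G` such that `a - b` is archimedean-strictly-smaller than `a`. -/
theorem stmt_2 {H : Type*} [AddCommGroup H] [LinearOrder H] [IsOrderedAddMonoid H] (G : AddSubgroup H)
    (hdense : ∀ a b : H, a < b → ∃ c ∈ G, a < c ∧ c < b)
    (hnolast : ∀ g ∈ G, 0 < g → ∃ c ∈ G, 0 < c ∧ ∀ n : ℕ, n • c < g) :
    ∀ a : H, a ≠ 0 → ∃ b ∈ G, ∀ n : ℕ, n • |a - b| < |a| := by
  intro a ha
  obtain ⟨c, -, hc0, hca⟩ :=
    AddSubgroup.exists_pos_mem_forall_nsmul_lt hdense hnolast (abs_pos.mpr ha)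
  obtain ⟨b, hbG, hab⟩ := AddSubgroup.exists_mem_abs_sub_lt_of_dense hdense a hc0
  exact ⟨b, hbG, fun n => (nsmul_le_nsmul_right hab.le n).trans_lt (hca n)⟩
end

section
/- Let G be an ordered abelian group such that for every prime p there exists a nontrivial convex subgroup G_p of G all of whose elements are p-divisible in G_p. Then G is closed in its divisible hull: no element of the divisible hull outside G is a limit point of G. -/
/-!
Let `x ∈ D \ G` and choose a prime `p` and `q` with `(p * q) • x ∈ G` but `q • x ∉ G` (descend
from any multiple of `x` lying in `G`). Take `0 < h` in the convex `p`-divisible subgroup `G_p`.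
If some `g ∈ G` had `|g - x| ≤ h`, then `d = (p * q) • (x - g) ∈ G` satisfies
`|d| ≤ (p * q) • h`, so `d ∈ G_p` by convexity; writing `d = p • d'` with `d' ∈ G_p` and
cancelling `p` in the torsion-free group `D` gives `q • x = q • g + d' ∈ G`, a contradiction.
Hence the interval `(x - h, x + h)` contains no point of `G`.
-/

theorem Nat.exists_prime_mul_and_not {P : ℕ → Prop} (h1 : ¬P 1) {n : ℕ} (hn : 0 < n) (hPn : P n) :
    ∃ p q : ℕ, p.Prime ∧ P (p * q) ∧ ¬P q := by
  induction n using Nat.strong_induction_on with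
  | _ n ih =>
    obtain ⟨p, hp, q, rfl⟩ := Nat.exists_prime_and_dvd (n := n) (by rintro rfl; exact h1 hPn)
    by_cases hPq : P q
    · have hq : 0 < q := Nat.pos_of_mul_pos_left hn
      exact ih q (lt_mul_left hq hp.one_lt) hq hPq
    · exact ⟨p, q, hp, hPn, hPq⟩

section OrderedGroup

variable {G D : Type*} [AddCommGroup G] [LinearOrder G] [AddCommGroup D] [LinearOrder D]

theorem Monotone.map_abs {f : G →+ D} (hf : Monotone f) (a : G) : f |a| = |f a| := by
  rw [abs, abs, hf.map_max, map_neg]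

variable [IsOrderedAddMonoid G] [IsOrderedAddMonoid D]

theorem AddSubgroup.exists_pos_mem_of_ne_bot {H : AddSubgroup G} (hH : H ≠ ⊥) :
    ∃ h ∈ H, 0 < h := by
  obtain ⟨a, ha, ha0⟩ := H.bot_or_exists_ne_zero.resolve_left hH
  exact ⟨|a|, abs_mem_iff.mpr ha, abs_pos.mpr ha0⟩

theorem AddSubgroup.mem_of_abs_le {H : AddSubgroup G}
    (hH : ∀ a b : G, b ∈ H → 0 ≤ a → a ≤ b → a ∈ H) {a b : G} (hb : b ∈ H) (hab : |a| ≤ b) :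
    a ∈ H :=
  abs_mem_iff.mp (hH _ _ hb (abs_nonneg a) hab)

theorem nsmul_mem_range_of_abs_sub_le {f : G →+ D} (hf : StrictMono f) {H : AddSubgroup G}
    (hconv : ∀ a b : G, b ∈ H → 0 ≤ a → a ≤ b → a ∈ H) {p : ℕ} (hp : p ≠ 0)
    (hdiv : ∀ h ∈ H, ∃ h' ∈ H, p • h' = h) {h : G} (hh : h ∈ H) {x : D} {q : ℕ}
    (hx : (p * q) • x ∈ Set.range f) {g : G} (hg : |f g - x| ≤ f h) : q • x ∈ Set.range f := by
  obtain ⟨g', hg'⟩ := hx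
  have hfd : f (g' - (p * q) • g) = (p * q) • (x - f g) := by
    rw [map_sub, map_nsmul, hg', smul_sub]
  have hd : g' - (p * q) • g ∈ H := by
    refine H.mem_of_abs_le hconv (H.nsmul_mem hh (p * q)) ?_
    rw [← hf.le_iff_le, hf.monotone.map_abs, hfd, abs_nsmul, map_nsmul, abs_sub_comm]
    exact nsmul_le_nsmul_right hg _
  obtain ⟨d, -, hd⟩ := hdiv _ hd
  refine ⟨q • g + d, nsmul_right_injective hp ?_⟩
  calc p • f (q • g + d) = f ((p * q) • g + p • d) := by
        rw [map_add, map_add, smul_add, map_nsmul, map_nsmul, map_nsmul, mul_nsmul']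
    _ = f g' := by rw [hd, add_sub_cancel]
    _ = p • q • x := by rw [hg', mul_nsmul']

end OrderedGroup

theorem stmt_3_general {G D : Type*} [AddCommGroup G] [LinearOrder G] [IsOrderedAddMonoid G]
    [AddCommGroup D] [LinearOrder D] [IsOrderedAddMonoid D]
    (f : G →+ D) (hf : StrictMono f)
    (hhull : ∀ d : D, ∃ (n : ℕ) (g : G), 0 < n ∧ n • d = f g)
    (hp : ∀ p : ℕ, p.Prime → ∃ Gp : AddSubgroup G, Gp ≠ ⊥ ∧
      (∀ a b : G, b ∈ Gp → 0 ≤ a → a ≤ b → a ∈ Gp) ∧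
      (∀ h ∈ Gp, ∃ h' ∈ Gp, p • h' = h)) :
    ∀ x : D, x ∉ Set.range f →
      ∃ a b : D, a < x ∧ x < b ∧ ∀ g : G, f g ∉ Set.Ioo a b := by
  intro x hx
  obtain ⟨n, g₀, hn, hg₀⟩ := hhull x
  obtain ⟨p, q, hprime, hpq, hq⟩ := Nat.exists_prime_mul_and_not
    (P := fun m => m • x ∈ Set.range f) (by simpa using hx) hn ⟨g₀, hg₀.symm⟩
  obtain ⟨H, hne, hconv, hdiv⟩ := hp p hprime
  obtain ⟨h, hhH, hpos⟩ := H.exists_pos_mem_of_ne_bot hne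
  have hfh : 0 < f h := by simpa using hf hpos
  refine ⟨x - f h, x + f h, sub_lt_self x hfh, lt_add_of_pos_right x hfh, fun g hg => hq ?_⟩
  refine nsmul_mem_range_of_abs_sub_le hf hconv hprime.ne_zero hdiv hhH hpq (g := g) ?_
  exact (abs_sub_lt_iff.mpr ⟨sub_lt_iff_lt_add'.mpr hg.2, sub_lt_comm.mp hg.1⟩).le

/-- Let `G` be an ordered abelian group such that for every prime `p` there is a nontrivial
convex subgroup `G_p` of `G` all of whose elements are `p`-divisible in `G_p`. Then `G` is
closed in its divisible hull `D` (modelled as a divisible ordered abelian group `D` with an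
order-embedding `f : G →+ D` such that every element of `D` has a positive multiple in the
image of `f`): no element of `D` outside the image of `G` is a limit point of `G`. -/
theorem stmt_3 {G D : Type*} [AddCommGroup G] [LinearOrder G] [IsOrderedAddMonoid G]
    [AddCommGroup D] [LinearOrder D] [IsOrderedAddMonoid D]
    (f : G →+ D) (hf : StrictMono f)
    (hdivD : ∀ (d : D) (n : ℕ), 0 < n → ∃ e : D, n • e = d)
    (hhull : ∀ d : D, ∃ (n : ℕ) (g : G), 0 < n ∧ n • d = f g)
    (hp : ∀ p : ℕ, p.Prime → ∃ Gp : AddSubgroup G, Gp ≠ ⊥ ∧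
      (∀ a b : G, b ∈ Gp → 0 ≤ a → a ≤ b → a ∈ Gp) ∧
      (∀ h ∈ Gp, ∃ h' ∈ Gp, p • h' = h)) :
    ∀ x : D, x ∉ Set.range f →
      ∃ a b : D, a < x ∧ x < b ∧ ∀ g : G, f g ∉ Set.Ioo a b :=
  stmt_3_general f hf hhull hp
end

section
/- An ordered abelian group G is densely ordered if and only if: either the value set of the natural valuation on G has no last element, or it has a last element γ and the corresponding archimedean component B_γ = G^γ / G_γ is densely ordered. -/
/-!
A translation-invariant order is dense as soon as every positive element has a smaller positive
one. Without a smallest archimedean class, `|h| < |b - a|` for some `h ≠ 0` below `b - a`; with a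
smallest class spanned by `g`, a positive element between `0` and `min |g| (b - a)` comes from
density of the hull of `g`. Conversely, in a dense group the element between `a` and `b` lies in
every convex hull containing `a` and `b`.
-/

section

variable {G : Type*} [AddCommGroup G] [LinearOrder G] [IsOrderedAddMonoid G]

theorem denselyOrdered_of_forall_pos_exists_pos_lt
    (h : ∀ ε : G, 0 < ε → ∃ c : G, 0 < c ∧ c < ε) : DenselyOrdered G := by
  refine ⟨fun a b hab => ?_⟩
  obtain ⟨c, hc_pos, hc_lt⟩ := h (b - a) (sub_pos.mpr hab)
  exact ⟨a + c, lt_add_of_pos_right a hc_pos, lt_sub_iff_add_lt'.mp hc_lt⟩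

theorem exists_abs_le_nsmul_of_le_of_le {a b c g : G} (hac : a ≤ c) (hcb : c ≤ b)
    (ha : ∃ n : ℕ, |a| ≤ n • |g|) (hb : ∃ n : ℕ, |b| ≤ n • |g|) :
    ∃ n : ℕ, |c| ≤ n • |g| := by
  obtain ⟨n, hn⟩ := ha
  obtain ⟨m, hm⟩ := hb
  refine ⟨n + m, ?_⟩
  calc |c| ≤ max |a| |b| := abs_le_max_abs_abs hac hcb
    _ ≤ |a| + |b| := max_le_add_of_nonneg (abs_nonneg a) (abs_nonneg b)
    _ ≤ n • |g| + m • |g| := add_le_add hn hm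
    _ = (n + m) • |g| := (add_nsmul _ n m).symm

end

/-- An ordered abelian group `G` is densely ordered iff either the value set of the natural
valuation has no last element (every nonzero `g` admits a nonzero `h` archimedean strictly
smaller than `g`), or it has a last element `γ` (witnessed by a nonzero `g` archimedean
smaller-or-equivalent to every nonzero element) and the corresponding archimedean component
`B_γ = G^γ / G_γ` is densely ordered (here `G_γ = {0}` and `G^γ = {x : ∃ n, |x| ≤ n•|g|}`,
so `B_γ` is identified with the convex subgroup `G^γ`). -/
theorem stmt_8 {G : Type*} [AddCommGroup G] [LinearOrder G] [IsOrderedAddMonoid G] :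
    DenselyOrdered G ↔
      ((∀ g : G, g ≠ 0 → ∃ h : G, h ≠ 0 ∧ ∀ n : ℕ, n • |h| < |g|) ∨
       (∃ g : G, g ≠ 0 ∧ (∀ h : G, h ≠ 0 → ∃ n : ℕ, |g| ≤ n • |h|) ∧
         (∀ a b : G, (∃ n : ℕ, |a| ≤ n • |g|) → (∃ n : ℕ, |b| ≤ n • |g|) →
           a < b → ∃ c : G, (∃ n : ℕ, |c| ≤ n • |g|) ∧ a < c ∧ c < b))) := by
  constructor
  · intro hG
    refine or_iff_not_imp_left.mpr fun hlast => ?_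
    push Not at hlast
    obtain ⟨g, hg, hg_least⟩ := hlast
    refine ⟨g, hg, hg_least, fun a b ha hb hab => ?_⟩
    obtain ⟨c, hac, hcb⟩ := exists_between hab
    exact ⟨c, exists_abs_le_nsmul_of_le_of_le hac.le hcb.le ha hb, hac, hcb⟩
  · rintro (hnolast | ⟨g, hg, -, hhull⟩) <;>
      refine denselyOrdered_of_forall_pos_exists_pos_lt fun ε hε => ?_
    · obtain ⟨h, hh, hsmall⟩ := hnolast ε hε.ne'
      refine ⟨|h|, abs_pos.mpr hh, ?_⟩
      simpa [abs_of_pos hε] using hsmall 1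
    · have he : 0 < min |g| ε := lt_min (abs_pos.mpr hg) hε
      obtain ⟨c, -, hc_pos, hc_lt⟩ := hhull 0 (min |g| ε) ⟨0, by simp⟩
        ⟨1, by simp [abs_of_pos he]⟩ he
      exact ⟨c, hc_pos, hc_lt.trans_le (min_le_right _ _)⟩
end

section
/- Let Γ be a nonempty totally ordered set without a last element, and for each γ ∈ Γ let A_γ be a nonzero subgroup of ℝ. If the Hahn product G = H_{γ∈Γ} A_γ is non-divisible, then G is closed in its divisible hull: no element of div(G) \ G is a limit point of G in the order topology. -/
/-!
A series `x` outside `G` has some coefficient `x_γ₀ ∉ A γ₀`, so every `g ∈ G` differs from `x`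
at an index `≤ γ₀`. Picking `γ₁ > γ₀`, the perturbation `± t^γ₁` is then negligible against
`g - x`, and the order interval `(x - t^γ₁, x + t^γ₁)` contains no element of `G`.
-/

open HahnSeries

namespace HahnSeries

variable {Γ R : Type*} [LinearOrder Γ] [AddCommGroup R] [LinearOrder R] [IsOrderedAddMonoid R]

theorem not_leadingCoeff_pos_add_single_and_neg_add_single {d : HahnSeries Γ R} {γ : Γ}
    (hd : d.orderTop < γ) (ε : R) :
    ¬ (0 < (d + single γ ε).leadingCoeff ∧ 0 < (-d + single γ ε).leadingCoeff) := by
  have hε : (single γ ε).orderTop ≥ γ := orderTop_single_le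
  rw [leadingCoeff_add_eq_left (hd.trans_le hε),
    leadingCoeff_add_eq_left (by rw [orderTop_neg]; exact hd.trans_le hε), leadingCoeff_neg]
  rintro ⟨hpos, hneg⟩
  exact (neg_pos.mp hneg).not_gt hpos

theorem not_mem_Ioo_sub_single_add_single {x g : HahnSeries Γ R} {γ₀ γ₁ : Γ}
    (hne : g.coeff γ₀ ≠ x.coeff γ₀) (hγ : γ₀ < γ₁) (ε : R) :
    ¬ (0 < (g - (x - single γ₁ ε)).leadingCoeff ∧ 0 < (x + single γ₁ ε - g).leadingCoeff) := by
  have hord : (g - x).orderTop < γ₁ :=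
    (orderTop_le_of_coeff_ne_zero (by rwa [coeff_sub, sub_ne_zero])).trans_lt
      (WithTop.coe_lt_coe.mpr hγ)
  rw [show g - (x - single γ₁ ε) = (g - x) + single γ₁ ε by abel,
    show x + single γ₁ ε - g = -(g - x) + single γ₁ ε by abel]
  exact not_leadingCoeff_pos_add_single_and_neg_add_single hord ε

end HahnSeries

theorem stmt_9_general {Γ : Type*} [LinearOrder Γ] [NoMaxOrder Γ]
    (A : Γ → AddSubgroup ℝ)
    (Gset : Set (HahnSeries Γ ℝ)) (hGset : Gset = {s | ∀ γ, s.coeff γ ∈ A γ})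
    (Dhull : Set (HahnSeries Γ ℝ)) :
    ∀ x ∈ Dhull, x ∉ Gset →
      ∃ a b : HahnSeries Γ ℝ, 0 < (x - a).leadingCoeff ∧ 0 < (b - x).leadingCoeff ∧
        ∀ g ∈ Gset, ¬ (0 < (g - a).leadingCoeff ∧ 0 < (b - g).leadingCoeff) := by
  subst hGset
  intro x _ hx
  obtain ⟨γ₀, hγ₀⟩ : ∃ γ₀, x.coeff γ₀ ∉ A γ₀ := by simpa using hx
  obtain ⟨γ₁, hγ⟩ := exists_gt γ₀
  refine ⟨x - single γ₁ 1, x + single γ₁ 1, ?_, ?_, fun g hg => ?_⟩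
  · simp
  · simp
  have hne : g.coeff γ₀ ≠ x.coeff γ₀ := fun h => hγ₀ (h ▸ hg γ₀)
  exact not_mem_Ioo_sub_single_add_single hne hγ 1

/-- Let `Γ` be a nonempty totally ordered set without a last element and, for each `γ ∈ Γ`,
let `A γ` be a nonzero subgroup of `ℝ`. The Hahn product `G = H_{γ∈Γ} A γ` is realised as
the set of Hahn series over `ℝ` with `γ`-th coefficient in `A γ`; its divisible hull is
realised inside `HahnSeries Γ ℝ` as the set of series some positive multiple of which lies
in `G`. The order is given by positivity of the leading coefficient. If `G` is
non-divisible, then `G` is closed in its divisible hull: no element of `div(G) \ G` is a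
limit point of `G` in the order topology. -/
theorem stmt_9 {Γ : Type*} [LinearOrder Γ] [Nonempty Γ] [NoMaxOrder Γ]
    (A : Γ → AddSubgroup ℝ) (hA : ∀ γ, A γ ≠ ⊥)
    (Gset : Set (HahnSeries Γ ℝ)) (hGset : Gset = {s | ∀ γ, s.coeff γ ∈ A γ})
    (Dhull : Set (HahnSeries Γ ℝ)) (hDhull : Dhull = {s | ∃ n : ℕ, 0 < n ∧ n • s ∈ Gset})
    (hnondiv : ∃ s ∈ Gset, ∃ n : ℕ, 0 < n ∧ ¬ ∃ t ∈ Gset, n • t = s) :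
    ∀ x ∈ Dhull, x ∉ Gset →
      ∃ a b : HahnSeries Γ ℝ, 0 < (x - a).leadingCoeff ∧ 0 < (b - x).leadingCoeff ∧
        ∀ g ∈ Gset, ¬ (0 < (g - a).leadingCoeff ∧ 0 < (b - g).leadingCoeff) :=
  stmt_9_general A Gset hGset Dhull
end

section
/- For any ordered field k and any nontrivial ordered abelian group G, the Hahn series field k((G)) is closed in its real closure with respect to the order topology: every element of the real closure of k((G)) that is a limit point of k((G)) lies in k((G)). -/
/-!
Let `x` be a limit point of `k((G))`. Choose for every `g : G` a series `s g` with
`|f (s g) - x| < t^g`. Two such approximants are closer than `t^g + t^g'`, so they agree below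
`min g g'`: the coefficients of `s g` below `g` do not depend on `g`, and they assemble into a
Hahn series `y` (below any exponent its support lies in the support of a single `s g`). Then
`x - f y` is infinitesimal with respect to `k((G))`. It is also algebraic over `k((G))`, and a
nonzero algebraic element `z` is never infinitesimal: its minimal polynomial gives
`a₀ + z q(z) = 0` with `a₀ ≠ 0`, hence `|a₀| ≤ |z| · ∑ |qᵢ|` once `|z| ≤ 1`.
-/

/-- A linearly ordered field is real closed if every positive element is a square and every
polynomial of odd degree has a root. -/
def IsRealClosedField (R : Type*) [Field R] [LinearOrder R] [IsStrictOrderedRing R] : Prop :=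
  (∀ x : R, 0 < x → ∃ y : R, y ^ 2 = x) ∧
    ∀ p : Polynomial R, Odd p.natDegree → ∃ x : R, p.eval x = 0

open Polynomial

theorem Monotone.map_abs_s10 {α β F : Type*} [AddGroup α] [LinearOrder α] [AddGroup β]
    [LinearOrder β] [FunLike F α β] [AddMonoidHomClass F α β] {f : F} (hf : Monotone f)
    (a : α) : f |a| = |f a| := by
  rw [abs, abs, hf.map_max, map_neg]

theorem abs_mem {S L : Type*} [AddGroup L] [LinearOrder L] [SetLike S L] [NegMemClass S L]
    {s : S} {a : L} (ha : a ∈ s) : |a| ∈ s := by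
  rcases abs_choice a with h | h <;> rw [h]
  exacts [ha, neg_mem ha]

theorem Polynomial.abs_eval₂_le_sum_abs_coeff {A L : Type*} [Semiring A] [CommRing L]
    [LinearOrder L] [IsStrictOrderedRing L] (φ : A →+* L) (p : A[X]) {z : L} (hz : |z| ≤ 1) :
    |p.eval₂ φ z| ≤ ∑ i ∈ p.support, |φ (p.coeff i)| := by
  rw [eval₂_eq_sum, Polynomial.sum_def]
  refine (Finset.abs_sum_le_sum_abs _ _).trans (Finset.sum_le_sum fun i _ => ?_)
  rw [abs_mul, abs_pow]
  exact mul_le_of_le_one_right (abs_nonneg _) (pow_le_one₀ (abs_nonneg z) hz)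

theorem IsAlgebraic.eq_zero_of_forall_abs_lt {L : Type*} [Field L] [LinearOrder L]
    [IsStrictOrderedRing L] {F : Subfield L} {z : L} (hz : IsAlgebraic F z)
    (hinf : ∀ ε ∈ F, 0 < ε → |z| < ε) : z = 0 := by
  by_contra hz0
  set q := minpoly F z
  set c := |algebraMap F L (q.coeff 0)| with hc_def
  set S := ∑ i ∈ q.divX.support, |algebraMap F L (q.divX.coeff i)|
  have hc : 0 < c :=
    abs_pos.mpr ((_root_.map_ne_zero _).mpr (minpoly.coeff_zero_ne_zero hz.isIntegral hz0))
  have hS : 0 ≤ S := Finset.sum_nonneg fun _ _ => abs_nonneg _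
  have hε : |z| < c / (S + c) := hinf _
    (div_mem (abs_mem (q.coeff 0).2) (add_mem (sum_mem fun i _ => abs_mem (q.divX.coeff i).2)
      (abs_mem (q.coeff 0).2))) (by positivity)
  have hz1 : |z| ≤ 1 := hε.le.trans ((div_le_one (by positivity)).mpr (le_add_of_nonneg_left hS))
  have hroot : aeval z q.divX * z + algebraMap F L (q.coeff 0) = 0 := by
    simpa using (congrArg (aeval z) (divX_mul_X_add q)).trans (minpoly.aeval F z)
  exact lt_irrefl c (calc
    c = |aeval z q.divX| * |z| := by
      rw [← abs_mul, hc_def, eq_neg_of_add_eq_zero_right hroot, abs_neg]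
    _ ≤ S * |z| :=
      mul_le_mul_of_nonneg_right (abs_eval₂_le_sum_abs_coeff _ _ hz1) (abs_nonneg z)
    _ ≤ S * (c / (S + c)) := mul_le_mul_of_nonneg_left hε.le hS
    _ < c := by
      rw [mul_div_assoc', div_lt_iff₀ (by positivity)]
      nlinarith)

namespace HahnSeries

theorem exists_coeff_eq_of_coeff_eq {Γ R : Type*} [LinearOrder Γ] [NoMaxOrder Γ] [Zero R]
    (s : Γ → HahnSeries Γ R)
    (hs : ∀ g g' j, j < g → j < g' → (s g).coeff j = (s g').coeff j) :
    ∃ y : HahnSeries Γ R, ∀ g j, j < g → y.coeff j = (s g).coeff j := by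
  choose above h_above using fun j : Γ => exists_gt j
  have hwf : (Function.support fun j => (s (above j)).coeff j).IsPWO := by
    rw [Set.isPWO_iff_isWF, Set.isWF_iff_no_descending_seq]
    intro a ha hmem
    refine Set.isWF_iff_no_descending_seq.mp (s (above (a 0))).isWF_support a ha fun n => ?_
    have hn : a n < above (a 0) := (ha.antitone n.zero_le).trans_lt (h_above _)
    rw [mem_support, ← hs _ _ _ (h_above (a n)) hn]
    exact hmem n
  exact ⟨⟨_, hwf⟩, fun g j hj => hs _ _ _ (h_above j) hj⟩

section Lex

variable {Γ R : Type*} [LinearOrder Γ] [AddCommGroup R] [LinearOrder R] [IsOrderedAddMonoid R]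

theorem orderTop_le_orderTop_of_abs_le {x y : Lex (HahnSeries Γ R)} (h : |x| ≤ |y|) :
    (ofLex y).orderTop ≤ (ofLex x).orderTop :=
  not_lt.mp fun hlt => (abs_lt_abs_of_orderTop_ofLex hlt).not_ge h

theorem coeff_eq_of_abs_sub_le {a b c : Lex (HahnSeries Γ R)} (h : |a - b| ≤ |c|) {j : Γ}
    (hj : j < (ofLex c).orderTop) : (ofLex a).coeff j = (ofLex b).coeff j := by
  rw [← sub_eq_zero, ← coeff_sub, ← ofLex_sub]
  exact coeff_eq_zero_of_lt_orderTop (hj.trans_le (orderTop_le_orderTop_of_abs_le h))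

end Lex

section Approximation

variable {Γ k L : Type*} [AddCommGroup Γ] [LinearOrder Γ] [IsOrderedAddMonoid Γ]
  [Ring k] [LinearOrder k] [IsStrictOrderedRing k]
  [CommRing L] [LinearOrder L] [IsStrictOrderedRing L]
  {φ : Lex (HahnSeries Γ k) →+* L} {x : L} {s : Γ → Lex (HahnSeries Γ k)}

theorem coeff_eq_of_abs_map_sub_lt_single (hφ : Monotone φ)
    (hs : ∀ g, |φ (s g) - x| < φ (toLex (single g 1))) {g g' j : Γ} (hg : j < g)
    (hg' : j < g') : (ofLex (s g)).coeff j = (ofLex (s g')).coeff j := by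
  set T := toLex (single g (1 : k)) + toLex (single g' 1)
  refine coeff_eq_of_abs_sub_le (c := T) ?_ ?_
  · by_contra! hlt
    have hT : φ T ≤ |φ (s g) - φ (s g')| := by
      rw [← map_sub, ← hφ.map_abs_s10]
      exact hφ ((le_abs_self T).trans hlt.le)
    have hφT : φ T = φ (toLex (single g 1)) + φ (toLex (single g' 1)) := map_add _ _ _
    linarith [hs g, hs g', abs_sub_le (φ (s g)) x (φ (s g')), abs_sub_comm x (φ (s g'))]
  · calc (j : WithTop Γ) < min (g : WithTop Γ) g' := lt_min (by exact_mod_cast hg)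
          (by exact_mod_cast hg')
      _ = min (single g (1 : k)).orderTop (single g' (1 : k)).orderTop := by
          rw [orderTop_single one_ne_zero, orderTop_single one_ne_zero]
      _ ≤ (ofLex T).orderTop := min_orderTop_le_orderTop_add

theorem abs_sub_map_lt_of_coeff_eq [Nontrivial Γ] (hφ : Monotone φ)
    (hs : ∀ g, |φ (s g) - x| < φ (toLex (single g 1))) {y : Lex (HahnSeries Γ k)}
    (hy : ∀ g j, j < g → (ofLex y).coeff j = (ofLex (s g)).coeff j)
    {ε : Lex (HahnSeries Γ k)} (hε : 0 < ε) : |x - φ y| < φ ε := by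
  obtain ⟨g, hg⟩ := exists_gt (ofLex ε).order
  set u := y - s g
  set T := toLex (single g (1 : k)) + |u|
  have hu : (g : WithTop Γ) ≤ (ofLex u).orderTop :=
    le_orderTop_iff_forall.mpr fun j hj => by
      rw [ofLex_sub, coeff_sub, hy g j (by exact_mod_cast hj), sub_self]
  have hT : (ofLex ε).orderTop < (ofLex T).orderTop := by
    calc (ofLex ε).orderTop = (ofLex ε).order := (order_eq_orderTop_of_ne_zero hε.ne').symm
      _ < g := by exact_mod_cast hg
      _ = min (single g (1 : k)).orderTop (ofLex |u|).orderTop := by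
          rw [orderTop_single one_ne_zero, orderTop_abs, min_eq_left hu]
      _ ≤ (ofLex T).orderTop := min_orderTop_le_orderTop_add
  have hTε : φ T ≤ φ ε := by
    have := abs_lt_abs_of_orderTop_ofLex hT
    rw [abs_of_pos hε] at this
    exact hφ ((le_abs_self T).trans this.le)
  have hφT : φ T = φ (toLex (single g 1)) + |φ y - φ (s g)| := by
    rw [map_add, hφ.map_abs_s10, map_sub]
  linarith [hs g, abs_sub_le x (φ (s g)) (φ y), abs_sub_comm x (φ (s g)),
    abs_sub_comm (φ (s g)) (φ y)]

theorem exists_forall_abs_sub_map_lt [Nontrivial Γ] (hφ : StrictMono φ)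
    (hx : ∀ a b, a < x → x < b → ∃ s, a < φ s ∧ φ s < b) :
    ∃ y, ∀ ε, 0 < ε → |x - φ y| < φ ε := by
  have hpos : ∀ g : Γ, 0 < φ (toLex (single g 1)) := fun g => by
    rw [← map_zero φ]
    exact hφ (leadingCoeff_pos_iff.mp (by simp))
  choose s hs using fun g => hx _ _ (sub_lt_self x (hpos g)) (lt_add_of_pos_right x (hpos g))
  have hs' : ∀ g, |φ (s g) - x| < φ (toLex (single g 1)) := fun g =>
    abs_sub_lt_iff.mpr ⟨by linarith [(hs g).2], by linarith [(hs g).1]⟩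
  obtain ⟨y, hy⟩ := exists_coeff_eq_of_coeff_eq (fun g => ofLex (s g))
    fun g g' j hg hg' => coeff_eq_of_abs_map_sub_lt_single hφ.monotone hs' hg hg'
  exact ⟨toLex y, fun ε hε => abs_sub_map_lt_of_coeff_eq hφ.monotone hs' hy hε⟩

end Approximation

end HahnSeries

theorem stmt_10_general {k : Type*} [Field k] [LinearOrder k] [IsStrictOrderedRing k] {G : Type*}
    [AddCommGroup G] [LinearOrder G] [IsOrderedAddMonoid G]
    (hG : ∃ g : G, g ≠ 0)
    {R : Type*} [Field R] [LinearOrder R] [IsStrictOrderedRing R]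
    (f : HahnSeries G k →+* R)
    (hord : ∀ s t : HahnSeries G k, 0 < (t - s).leadingCoeff → f s < f t)
    (halg : ∀ x : R, ∃ p : Polynomial (HahnSeries G k), p ≠ 0 ∧ p.eval₂ f x = 0) :
    ∀ x : R, (∀ a b : R, a < x → x < b → ∃ s : HahnSeries G k, a < f s ∧ f s < b) →
      x ∈ Set.range f := by
  intro x hx
  obtain ⟨g, hg⟩ := hG
  have : Nontrivial G := ⟨⟨g, 0, hg⟩⟩
  let φ : Lex (HahnSeries G k) →+* R := f
  have hφ : StrictMono φ := fun s t hst =>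
    hord _ _ (HahnSeries.leadingCoeff_pos_iff.mpr (sub_pos.mpr hst))
  obtain ⟨y, hy⟩ := HahnSeries.exists_forall_abs_sub_map_lt hφ hx
  have hinf : ∀ ε ∈ f.fieldRange, 0 < ε → |x - f y| < ε := by
    rintro _ ⟨s, rfl⟩ hs
    exact hy (toLex s) (hφ.lt_iff_lt.mp (by rwa [map_zero]))
  obtain ⟨p, hp, hpx⟩ := halg (x - f y)
  have hfy : IsAlgebraic f.fieldRange (x - f y) :=
    ⟨p.map f.rangeRestrictField,
      (Polynomial.map_ne_zero_iff f.rangeRestrictField.injective).mpr hp,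
      by rwa [aeval_def, eval₂_map]⟩
  exact ⟨ofLex y, (sub_eq_zero.mp (hfy.eq_zero_of_forall_abs_lt hinf)).symm⟩

/-- For any ordered field `k` and any nontrivial ordered abelian group `G`, the Hahn field
`k((G))` (ordered by the sign of the leading coefficient) is closed in its real closure `R`
with respect to the order topology: every element of `R` which is a limit point of `k((G))`
lies in `k((G))`. The real closure is modelled by a real closed field `R` together with an
order-preserving field embedding `f` with algebraic image. -/
theorem stmt_10 {k : Type*} [Field k] [LinearOrder k] [IsStrictOrderedRing k] {G : Type*}
    [AddCommGroup G] [LinearOrder G] [IsOrderedAddMonoid G]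
    (hG : ∃ g : G, g ≠ 0)
    {R : Type*} [Field R] [LinearOrder R] [IsStrictOrderedRing R] (hR : IsRealClosedField R)
    (f : HahnSeries G k →+* R)
    (hord : ∀ s t : HahnSeries G k, 0 < (t - s).leadingCoeff → f s < f t)
    (halg : ∀ x : R, ∃ p : Polynomial (HahnSeries G k), p ≠ 0 ∧ p.eval₂ f x = 0) :
    ∀ x : R, (∀ a b : R, a < x → x < b → ∃ s : HahnSeries G k, a < f s ∧ f s < b) →
      x ∈ Set.range f :=
  stmt_10_general hG f hord halg
end

section
/- Let k be an ordered field and G ≠ {0} an ordered abelian group such that the Hahn field k((G)) is not real closed. Then k((G)) is not dense in its real closure. -/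
/-!
The monomials `single g 1` give a decreasing family of positive scales `f (single g 1)` in `R`,
and two series whose images lie within `2 * f (single g 1)` of each other agree below `g`.
If some `x ∉ f(k((G)))` could be approximated to within every scale, the approximants would
therefore be coherent on longer and longer initial segments of `G`; gluing them gives a Hahn
series `y` with `|x - f y|` below every scale, and any series closer to `x` than `f y` differs
from `y` by less than every scale, so equals `y`. Hence every point off the image has a
neighbourhood missing the image.
-/

theorem Set.IsWF.of_forall_inter_Iio {α : Type*} [Preorder α] {s : Set α}
    (h : ∀ a ∈ s, (s ∩ Set.Iio a).IsWF) : s.IsWF := by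
  rw [Set.isWF_iff_no_descending_seq]
  intro a ha hmem
  exact Set.isWF_iff_no_descending_seq.1 (h _ (hmem 0)) (a ∘ Nat.succ)
    (ha.comp_strictMono fun _ _ => Nat.succ_lt_succ) fun n => ⟨hmem _, ha n.succ_pos⟩

namespace HahnSeries

theorem exists_forall_coeff_eq {Γ R : Type*} [LinearOrder Γ] [NoMaxOrder Γ] [Zero R]
    (S : Γ → HahnSeries Γ R)
    (hS : ∀ g g', g ≤ g' → ∀ h < g, (S g).coeff h = (S g').coeff h) :
    ∃ y : HahnSeries Γ R, ∀ g, ∀ h < g, y.coeff h = (S g).coeff h := by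
  choose above lt_above using fun h : Γ => exists_gt h
  have hcoeff : ∀ g, ∀ h < g, (S (above h)).coeff h = (S g).coeff h := by
    intro g h hh
    rcases le_total (above h) g with hle | hle
    · exact hS _ _ hle h (lt_above h)
    · exact (hS _ _ hle h hh).symm
  refine ⟨⟨fun h => (S (above h)).coeff h, ?_⟩, hcoeff⟩
  refine Set.isPWO_iff_isWF.2 <| Set.IsWF.of_forall_inter_Iio fun a _ =>
    (S a).isWF_support.mono fun h ⟨hh, hlt⟩ => ?_
  rwa [Function.mem_support, hcoeff a h hlt] at hh

section OrderedHom

variable {k G R : Type*} [Ring k] [AddCommMonoid G] [LinearOrder G] [IsOrderedCancelAddMonoid G]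
  [CommRing R] {f : HahnSeries G k →+* R}

theorem map_single_two (g : G) : f (single g 2) = 2 * f (single g 1) := by
  rw [← one_add_one_eq_two, single_add, map_add, two_mul]

variable [LinearOrder k] [LinearOrder R]

theorem map_single_pos (hf : ∀ u : HahnSeries G k, 0 < u.leadingCoeff → 0 < f u)
    {g : G} {r : k} (hr : 0 < r) : 0 < f (single g r) :=
  hf _ (by rwa [leadingCoeff_of_single])

variable [IsStrictOrderedRing R]

theorem abs_map_lt_map_single (hf : ∀ u : HahnSeries G k, 0 < u.leadingCoeff → 0 < f u)
    {v : HahnSeries G k} {g : G} (hv : (g : WithTop G) < v.orderTop) {r : k} (hr : 0 < r) :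
    |f v| < f (single g r) := by
  have hg : (single g r).orderTop < v.orderTop := by rwa [orderTop_single hr.ne']
  have hadd := hf (single g r + v) (by rwa [leadingCoeff_add_eq_left hg, leadingCoeff_of_single])
  have hsub := hf (single g r - v) (by rwa [leadingCoeff_sub hg, leadingCoeff_of_single])
  rw [map_add] at hadd
  rw [map_sub] at hsub
  exact abs_lt.2 ⟨by linarith, by linarith⟩

variable [IsStrictOrderedRing k]

theorem map_single_lt_abs_map (hf : ∀ u : HahnSeries G k, 0 < u.leadingCoeff → 0 < f u)
    {u : HahnSeries G k} {g : G} (hu : u.orderTop < g) (r : k) : f (single g r) < |f u| := by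
  have of_pos : ∀ v : HahnSeries G k, v.orderTop < g → 0 < v.leadingCoeff →
      f (single g r) < f v := fun v hv hpos => by
    have := hf (v - single g r) (by rwa [leadingCoeff_sub (hv.trans_le orderTop_single_le)])
    rwa [map_sub, sub_pos] at this
  have hu0 : u ≠ 0 := orderTop_ne_top.1 (hu.trans (WithTop.coe_lt_top g)).ne
  rcases (leadingCoeff_ne_zero.2 hu0).lt_or_gt with hneg | hpos
  · calc f (single g r) < f (-u) :=
          of_pos (-u) (by rwa [orderTop_neg]) (by rwa [leadingCoeff_neg, neg_pos])
      _ = -f u := map_neg f u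
      _ ≤ |f u| := neg_le_abs _
  · exact (of_pos u hu hpos).trans_le (le_abs_self _)

theorem two_mul_map_single_lt (hf : ∀ u : HahnSeries G k, 0 < u.leadingCoeff → 0 < f u)
    {g g' : G} (hg : g < g') :
    2 * f (single g' 1) < f (single g 1) := by
  have := map_single_lt_abs_map hf (u := single g 1)
    (by rwa [orderTop_single one_ne_zero, WithTop.coe_lt_coe]) 2
  rwa [map_single_two, abs_of_pos (map_single_pos hf one_pos)] at this

theorem antitone_map_single_one (hf : ∀ u : HahnSeries G k, 0 < u.leadingCoeff → 0 < f u) :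
    Antitone fun g : G => f (single g 1) := by
  intro g g' hg
  show f (single g' 1) ≤ f (single g 1)
  rcases hg.eq_or_lt with rfl | hlt
  · rfl
  · linarith [two_mul_map_single_lt hf hlt, map_single_pos hf (g := g') one_pos]

theorem le_orderTop_of_abs_map_lt (hf : ∀ u : HahnSeries G k, 0 < u.leadingCoeff → 0 < f u)
    {u : HahnSeries G k} {g : G} (hu : |f u| < 2 * f (single g 1)) :
    (g : WithTop G) ≤ u.orderTop := by
  by_contra! hlt
  have := map_single_lt_abs_map hf hlt 2
  rw [map_single_two] at this
  exact hu.not_gt this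

theorem eq_zero_of_forall_abs_map_lt [NoMaxOrder G]
    (hf : ∀ u : HahnSeries G k, 0 < u.leadingCoeff → 0 < f u)
    {u : HahnSeries G k} (hu : ∀ g, |f u| < 2 * f (single g 1)) : u = 0 := by
  by_contra hu0
  obtain ⟨g, hg⟩ := exists_gt u.order
  have := le_orderTop_of_abs_map_lt hf (hu g)
  rw [← order_eq_orderTop_of_ne_zero hu0, WithTop.coe_le_coe] at this
  exact this.not_gt hg

theorem exists_forall_abs_sub_map_lt_s11 [NoMaxOrder G]
    (hf : ∀ u : HahnSeries G k, 0 < u.leadingCoeff → 0 < f u) {x : R}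
    (hx : ∀ g, ∃ s, |x - f s| < f (single g 1)) : ∃ y, ∀ g, |x - f y| < f (single g 1) := by
  choose S hS using hx
  have close : ∀ g g' : G, g ≤ g' → (g : WithTop G) ≤ (S g - S g').orderTop := by
    intro g g' hg
    apply le_orderTop_of_abs_map_lt hf
    calc |f (S g - S g')| = |(x - f (S g')) - (x - f (S g))| := by rw [map_sub]; ring_nf
      _ ≤ |x - f (S g')| + |x - f (S g)| := abs_sub _ _
      _ < f (single g 1) + f (single g 1) :=
        add_lt_add ((hS g').trans_le (antitone_map_single_one hf hg)) (hS g)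
      _ = 2 * f (single g 1) := (two_mul _).symm
  obtain ⟨y, hy⟩ := exists_forall_coeff_eq S fun g g' hg h hh => sub_eq_zero.1 <| by
    rw [← coeff_sub]
    exact le_orderTop_iff_forall.1 (close g g' hg) h (WithTop.coe_lt_coe.2 hh)
  refine ⟨y, fun g => ?_⟩
  obtain ⟨g₁, hg₁⟩ := exists_gt g
  obtain ⟨g₂, hg₂⟩ := exists_gt g₁
  have hy₂ : (g₁ : WithTop G) < (S g₂ - y).orderTop :=
    (WithTop.coe_lt_coe.2 hg₂).trans_le <| le_orderTop_iff_forall.2 fun h hh => by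
      rw [coeff_sub, hy g₂ h (WithTop.coe_lt_coe.1 hh), sub_self]
  calc |x - f y| = |(x - f (S g₂)) + f (S g₂ - y)| := by rw [map_sub]; ring_nf
    _ ≤ |x - f (S g₂)| + |f (S g₂ - y)| := abs_add_le _ _
    _ < f (single g₁ 1) + f (single g₁ 1) :=
      add_lt_add ((hS g₂).trans_le (antitone_map_single_one hf hg₂.le))
        (abs_map_lt_map_single hf hy₂ one_pos)
    _ = 2 * f (single g₁ 1) := (two_mul _).symm
    _ < f (single g 1) := two_mul_map_single_lt hf hg₁

theorem exists_pos_le_abs_sub_map [NoMaxOrder G]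
    (hf : ∀ u : HahnSeries G k, 0 < u.leadingCoeff → 0 < f u) {x : R}
    (hx : x ∉ Set.range f) : ∃ δ > 0, ∀ s, δ ≤ |x - f s| := by
  by_cases hgap : ∃ g, ∀ s, f (single g 1) ≤ |x - f s|
  · obtain ⟨g, hg⟩ := hgap
    exact ⟨_, map_single_pos hf one_pos, hg⟩
  push Not at hgap
  obtain ⟨y, hy⟩ := exists_forall_abs_sub_map_lt_s11 hf hgap
  refine ⟨|x - f y|, abs_pos.2 (sub_ne_zero.2 fun h => hx ⟨y, h.symm⟩), fun s => ?_⟩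
  by_contra! hs
  have hsy : s - y = 0 := eq_zero_of_forall_abs_map_lt hf fun g => calc
    |f (s - y)| = |(x - f y) - (x - f s)| := by rw [map_sub]; ring_nf
    _ ≤ |x - f y| + |x - f s| := abs_sub _ _
    _ < 2 * f (single g 1) := by linarith [hy g]
  rw [sub_eq_zero.1 hsy] at hs
  exact hs.false

end OrderedHom

end HahnSeries

theorem stmt_11_general {k : Type*} [Field k] [LinearOrder k] [IsStrictOrderedRing k] {G : Type*} [AddCommGroup G] [LinearOrder G] [IsOrderedAddMonoid G]
    (hG : ∃ g : G, g ≠ 0)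
    {R : Type*} [Field R] [LinearOrder R] [IsStrictOrderedRing R]
    (f : HahnSeries G k →+* R)
    (hord : ∀ s t : HahnSeries G k, 0 < (t - s).leadingCoeff → f s < f t)
    (hnotrc : ¬ Function.Surjective f) :
    ∃ a b : R, a < b ∧ ∀ s : HahnSeries G k, f s ∉ Set.Ioo a b := by
  obtain ⟨g, hg⟩ := hG
  have : Nontrivial G := nontrivial_of_ne g 0 hg
  have hf : ∀ u : HahnSeries G k, 0 < u.leadingCoeff → 0 < f u := fun u hu => by
    simpa using hord 0 u (by simpa using hu)
  obtain ⟨x, hx⟩ := not_forall.1 hnotrc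
  obtain ⟨δ, hδ, hgap⟩ := HahnSeries.exists_pos_le_abs_sub_map hf hx
  refine ⟨x - δ, x + δ, by linarith, fun s hs => (hgap s).not_gt ?_⟩
  rw [abs_sub_lt_iff]
  constructor <;> linarith [hs.1, hs.2]

/-- Let `k` be an ordered field and `G ≠ {0}` an ordered abelian group such that the Hahn
field `k((G))` is not real closed (i.e. its real closure, modelled by a real closed field
`R` with an order-preserving embedding `f` with algebraic image, is a proper extension).
Then `k((G))` is not dense in its real closure. -/
theorem stmt_11 {k : Type*} [Field k] [LinearOrder k] [IsStrictOrderedRing k] {G : Type*} [AddCommGroup G] [LinearOrder G] [IsOrderedAddMonoid G]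
    (hG : ∃ g : G, g ≠ 0)
    {R : Type*} [Field R] [LinearOrder R] [IsStrictOrderedRing R] (hR : IsRealClosedField R)
    (f : HahnSeries G k →+* R)
    (hord : ∀ s t : HahnSeries G k, 0 < (t - s).leadingCoeff → f s < f t)
    (halg : ∀ x : R, ∃ p : Polynomial (HahnSeries G k), p ≠ 0 ∧ p.eval₂ f x = 0)
    (hnotrc : ¬ Function.Surjective f) :
    ∃ a b : R, a < b ∧ ∀ s : HahnSeries G k, f s ∉ Set.Ioo a b :=
  stmt_11_general hG f hord hnotrc
end

section
/- Let (K,<) ⊆ (L,<) be a dense extension of ordered fields, let O_K and O_L be the convex rings of finite elements (natural valuation rings) viewed as additive groups, and suppose A is an additive subgroup of K with K = A ⊕ O_K (internal direct sum of ordered groups). Then K is dense in L if and only if A is also a group complement to O_L in L, i.e., L = A ⊕ O_L. -/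
/-!
Write `y ≈ x` when `|y - x|` is bounded by a natural number. If `K` is dense in `L`, every
`y ∈ L` is within `1` of some element of `K`, hence `≈` an element of `A`; and since `f` is an
order embedding, `|f a| ≤ n` forces `|a| ≤ n`.

Conversely, if every `y ∈ L` is `≈` some `f a`, then `y - f a` lies between two consecutive
integers, so every `y` is within `1` of `f(K)`. In particular `f(K)` contains arbitrarily
large `f w`, and approximating `c · f w` within `1` and dividing by `f w` approximates the
midpoint `c` of an interval within `1 / f w`.
-/

section OrderedFieldEmbedding

variable {K L : Type*} [Field K] [LinearOrder K] [IsStrictOrderedRing K]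
  [Field L] [LinearOrder L] [IsStrictOrderedRing L]

theorem StrictMono.map_abs {f : K →+* L} (hf : StrictMono f) (x : K) : f |x| = |f x| := by
  simp only [abs, hf.monotone.map_max, map_neg]

theorem StrictMono.abs_map_le_natCast_iff {f : K →+* L} (hf : StrictMono f) (x : K) (n : ℕ) :
    |f x| ≤ n ↔ |x| ≤ n := by
  rw [← hf.map_abs, ← map_natCast f n, hf.le_iff_le]

theorem exists_int_le_lt_add_one_of_abs_le_natCast (s : L) (m : ℕ) (hs : |s| ≤ m) :
    ∃ k : ℤ, (k : L) ≤ s ∧ s < k + 1 := by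
  have hbdd : ∀ k : ℤ, (k : L) ≤ s → k ≤ m := fun k hk ↦ by
    exact_mod_cast hk.trans ((le_abs_self s).trans hs)
  have hne : ∃ k : ℤ, (k : L) ≤ s := ⟨-m, by push_cast; linarith [neg_abs_le s]⟩
  obtain ⟨k, hk, hmax⟩ := Int.exists_greatest_of_bdd ⟨m, hbdd⟩ hne
  refine ⟨k, hk, lt_of_not_ge fun hle ↦ ?_⟩
  have := hmax (k + 1) (by push_cast; exact hle)
  omega

theorem exists_abs_sub_map_lt_one (f : K →+* L)
    (hfin : ∀ y : L, ∃ x : K, ∃ n : ℕ, |y - f x| ≤ n) (y : L) :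
    ∃ x : K, |y - f x| < 1 := by
  obtain ⟨x, m, hm⟩ := hfin y
  obtain ⟨k, hk, hk1⟩ := exists_int_le_lt_add_one_of_abs_le_natCast _ m hm
  refine ⟨x + k, ?_⟩
  rw [map_add, map_intCast, abs_lt]
  constructor <;> linarith

theorem exists_map_mem_Ioo_of_abs_sub_map_lt_one (f : K →+* L)
    (happrox : ∀ y : L, ∃ x : K, |y - f x| < 1) {a b : L} (hab : a < b) :
    ∃ x : K, a < f x ∧ f x < b := by
  have hε : 0 < 2 / (b - a) := div_pos two_pos (sub_pos.2 hab)
  obtain ⟨x, hx⟩ := happrox (2 / (b - a))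
  have hw : 2 / (b - a) < f (x + 1) := by
    rw [map_add, map_one]
    linarith [(abs_lt.1 hx).2]
  have hw_pos : 0 < f (x + 1) := hε.trans hw
  have hinv : 1 / f (x + 1) < (b - a) / 2 := by
    simpa only [one_div_div] using one_div_lt_one_div_of_lt hε hw
  obtain ⟨z, hz⟩ := happrox ((a + b) / 2 * f (x + 1))
  have hclose : |(a + b) / 2 - f (z / (x + 1))| < (b - a) / 2 := by
    have hsub : (a + b) / 2 - f (z / (x + 1)) = ((a + b) / 2 * f (x + 1) - f z) / f (x + 1) := by
      rw [map_div₀]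
      field_simp
    rw [hsub, abs_div, abs_of_pos hw_pos]
    calc _ < 1 / f (x + 1) := by gcongr
      _ < (b - a) / 2 := hinv
  refine ⟨z / (x + 1), ?_, ?_⟩ <;> linarith [abs_lt.1 hclose]

end OrderedFieldEmbedding

/-- Let `(K,<) ⊆ (L,<)` be an extension of ordered fields (given by an order-preserving
field embedding `f`), let `O_K` and `O_L` be the natural valuation rings of finite elements
(as additive groups), and let `A` be an additive subgroup of `K` which is a group complement
to `O_K` in `K`. Then `K` is dense in `L` if and only if (the image of) `A` is also a group
complement to `O_L` in `L`. -/
theorem stmt_14 {K L : Type*} [Field K] [LinearOrder K] [IsStrictOrderedRing K]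
    [Field L] [LinearOrder L] [IsStrictOrderedRing L]
    (f : K →+* L) (hf : StrictMono f)
    (A : AddSubgroup K)
    (hinterK : ∀ a ∈ A, (∃ n : ℕ, |a| ≤ (n : K)) → a = 0)
    (hsumK : ∀ x : K, ∃ a ∈ A, ∃ n : ℕ, |x - a| ≤ (n : K)) :
    ((∀ a b : L, a < b → ∃ x : K, a < f x ∧ f x < b) ↔
      ((∀ a ∈ A, (∃ n : ℕ, |f a| ≤ (n : L)) → a = 0) ∧
       (∀ y : L, ∃ a ∈ A, ∃ n : ℕ, |y - f a| ≤ (n : L)))) := by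
  constructor
  · intro hdense
    refine ⟨fun a ha ⟨n, hn⟩ ↦ hinterK a ha ⟨n, (hf.abs_map_le_natCast_iff a n).1 hn⟩, fun y ↦ ?_⟩
    obtain ⟨x, hx₁, hx₂⟩ := hdense (y - 1) (y + 1) (by linarith)
    obtain ⟨a, ha, n, hn⟩ := hsumK x
    refine ⟨a, ha, n + 1, ?_⟩
    have hyx : |y - f x| ≤ 1 := abs_le.2 ⟨by linarith, by linarith⟩
    have hxa : |f x - f a| ≤ n := by rwa [← map_sub, hf.abs_map_le_natCast_iff]
    calc |y - f a| ≤ |y - f x| + |f x - f a| := abs_sub_le _ _ _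
      _ ≤ 1 + n := add_le_add hyx hxa
      _ = ((n + 1 : ℕ) : L) := by push_cast; ring
  · rintro ⟨-, hsumL⟩ a b hab
    have hfin : ∀ y : L, ∃ x : K, ∃ n : ℕ, |y - f x| ≤ n := fun y ↦
      (hsumL y).imp fun _ ↦ And.right
    exact exists_map_mem_Ioo_of_abs_sub_map_lt_one f (exists_abs_sub_map_lt_one f hfin) hab
end

section
/- Let (K,<) be a countable ordered field whose transcendence degree over ℚ is countably infinite. Then K admits a transcendence basis over ℚ that is dense in K with respect to the order topology. -/
/-!
If every element of an interval `(a, c)` were algebraic over a subfield `F`, then so would be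
every `x`, because `(a + c) / 2 + (c - a) / (4 (1 + x²))` lies in that interval. A finitely
generated subfield cannot have `K` algebraic over it when the transcendence degree is infinite,
so every interval contains an element transcendental over it. Enumerating the countably many
pairs `a < c` and adjoining such an element for each one in turn yields a dense algebraically
independent set, which extends to a transcendence basis.
-/

open Set IntermediateField

theorem Algebra.isAlgebraic_of_forall_mem_Ioo {F K : Type*} [Field F] [Field K] [LinearOrder K]
    [IsStrictOrderedRing K] [Algebra F K] {a c : K} (hac : a < c)
    (h : ∀ y ∈ Ioo a c, IsAlgebraic F y) : Algebra.IsAlgebraic F K := by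
  set A := algebraicClosure F K
  have hA : ∀ y ∈ Ioo a c, y ∈ A := fun y hy => mem_algebraicClosure_iff.2 (h y hy)
  have hshift : ∀ r : K, 0 < r → r ≤ 1 → (a + c) / 2 + (c - a) / 4 * r ∈ A := fun r hr₀ hr₁ =>
    hA _ ⟨by nlinarith, by nlinarith⟩
  have hm : (a + c) / 2 ∈ A := hA _ ⟨by linarith, by linarith⟩
  have hd : (c - a) / 4 ≠ 0 := by linarith
  have hdA : (c - a) / 4 ∈ A := by simpa using sub_mem (hshift 1 one_pos le_rfl) hm
  refine ⟨fun x => ?_⟩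
  have hx : 1 ≤ 1 + x ^ 2 := by nlinarith [sq_nonneg x]
  have hr : (1 + x ^ 2)⁻¹ ∈ A := by
    have hdr : (c - a) / 4 * (1 + x ^ 2)⁻¹ ∈ A := by
      simpa using sub_mem (hshift _ (by positivity) (inv_le_one_of_one_le₀ hx)) hm
    simpa [hd] using div_mem hdr hdA
  have hx2 : x ^ 2 ∈ A := by simpa using sub_mem (inv_mem hr) (one_mem A)
  exact (mem_algebraicClosure_iff.1 hx2).of_pow two_pos

theorem IsTranscendenceBasis.not_isAlgebraic_adjoin_of_finite {R A ι : Type*} [CommRing R]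
    [CommRing A] [IsDomain A] [Algebra R A] [Infinite ι] {x : ι → A}
    (hx : IsTranscendenceBasis R x) {s : Set A} (hs : s.Finite) :
    ¬ Algebra.IsAlgebraic (Algebra.adjoin R s) A := by
  intro halg
  have := (algebraMap R A).domain_nontrivial
  have := (faithfulSMul_iff_algebraMap_injective R A).mpr hx.1.algebraMap_injective
  obtain ⟨t, hts, ht⟩ := exists_isTranscendenceBasis_subset (R := R) s
  have hcard := hx.lift_cardinalMk_eq ht
  have := (hs.subset hts).to_subtype
  exact (Cardinal.lift_lt_aleph0.2 (Cardinal.lt_aleph0_of_finite t)).not_ge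
    (hcard ▸ Cardinal.aleph0_le_lift.2 (Cardinal.aleph0_le_mk ι))

section OrderedField

variable {F K ι : Type*} [Field F] [Field K] [LinearOrder K] [IsStrictOrderedRing K]
  [Algebra F K] [Infinite ι] {x : ι → K}

theorem IsTranscendenceBasis.exists_mem_Ioo_algebraicIndepOn_insert
    (hx : IsTranscendenceBasis F x) {s : Set K} (hsf : s.Finite) (hs : AlgebraicIndepOn F id s)
    {a c : K} (hac : a < c) : ∃ t ∈ Ioo a c, AlgebraicIndepOn F id (insert t s) := by
  have hnalg : ¬ Algebra.IsAlgebraic (adjoin F s) K := by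
    rw [isAlgebraic_adjoin_iff_top]
    exact hx.not_isAlgebraic_adjoin_of_finite hsf
  obtain ⟨t, ht, htr⟩ : ∃ t ∈ Ioo a c, Transcendental (adjoin F s) t := by
    by_contra! h
    exact hnalg (Algebra.isAlgebraic_of_forall_mem_Ioo hac fun y hy => not_not.1 (h y hy))
  refine ⟨t, ht, hs.insert ?_⟩
  rwa [image_id, ← transcendental_adjoin_iff]

theorem IsTranscendenceBasis.exists_algebraicIndepOn_dense [Countable K]
    (hx : IsTranscendenceBasis F x) :
    ∃ s : Set K, AlgebraicIndepOn F id s ∧ ∀ a c : K, a < c → ∃ t ∈ s, a < t ∧ t < c := by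
  let S := {s : Set K // s.Finite ∧ AlgebraicIndepOn F id s}
  have hnext : ∀ (s : S) (p : K × K), ∃ s' : S, s.1 ⊆ s'.1 ∧
      (p.1 < p.2 → ∃ t ∈ s'.1, p.1 < t ∧ t < p.2) := by
    rintro ⟨s, hsf, hs⟩ ⟨a, c⟩
    by_cases hac : a < c
    · obtain ⟨t, ht, hts⟩ := hx.exists_mem_Ioo_algebraicIndepOn_insert hsf hs hac
      exact ⟨⟨insert t s, hsf.insert t, hts⟩, subset_insert t s,
        fun _ => ⟨t, mem_insert t s, ht⟩⟩
    · exact ⟨⟨s, hsf, hs⟩, subset_rfl, fun h => absurd h hac⟩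
  choose next hnext_sub hnext_dense using hnext
  obtain ⟨e, he⟩ := exists_surjective_nat (K × K)
  let seq : ℕ → S := fun n => Nat.rec ⟨∅, finite_empty, algebraicIndependent_empty_type⟩
    (fun n s => next s (e n)) n
  have hmono : Monotone fun n => (seq n).1 := monotone_nat_of_le_succ fun n => hnext_sub _ _
  refine ⟨⋃ n, (seq n).1,
    algebraicIndependent_iUnion_of_directed hmono.directed_le fun n => (seq n).2.2,
    fun a c hac => ?_⟩
  obtain ⟨n, hn⟩ := he (a, c)
  obtain ⟨t, hts, ht⟩ := hnext_dense (seq n) (e n) (by rwa [hn])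
  rw [hn] at ht
  exact ⟨t, mem_iUnion.2 ⟨n + 1, hts⟩, ht⟩

end OrderedField

/-- Let `(K,<)` be a countable ordered field whose transcendence degree over `ℚ` is countably
infinite. Then `K` admits a transcendence basis over `ℚ` that is dense in `K` for the order
topology. -/
theorem stmt_15 {K : Type*} [Field K] [LinearOrder K] [IsStrictOrderedRing K] [Countable K]
    (htd : ∃ b : Set K, IsTranscendenceBasis ℚ ((↑) : b → K) ∧ b.Countable ∧ b.Infinite) :
    ∃ T : Set K, IsTranscendenceBasis ℚ ((↑) : T → K) ∧
      ∀ a b : K, a < b → ∃ t ∈ T, a < t ∧ t < b := by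
  obtain ⟨b, hb, -, hbi⟩ := htd
  have := hbi.to_subtype
  obtain ⟨s, hs, hdense⟩ := hb.exists_algebraicIndepOn_dense
  obtain ⟨T, hsT, hT⟩ := exists_isTranscendenceBasis_superset hs
  refine ⟨T, hT, fun a c hac => ?_⟩
  obtain ⟨t, hts, ht⟩ := hdense a c hac
  exact ⟨t, hsT hts, ht⟩
end

section
/- Let k be an ordered field and G an ordered abelian group such that the residue field k is 2-euclidean (every positive element is a square) and G is 2-divisible. Then in the Hahn field k((G)) with valuation v = v_min, an element a is nonnegative if and only if a = 0 or there exists y with v(a − y²) > v(a). Consequently, the ordering of k((G)) is definable without parameters in the language of valued fields. -/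
/-!
If `a ≠ 0`, then `v(a - b) > v(a)` says exactly that `b` has the same leading term as `a`.
The leading coefficient of a square is a square, hence positive when nonzero; conversely,
when `lc(a) = s²` and `v(a) = h + h`, the monomial `s·t^h` squares to the leading term of `a`.
-/

namespace HahnSeries

variable {Γ R : Type*}

theorem orderTop_lt_orderTop_sub_iff [LinearOrder Γ] [AddCommGroup R] {a b : HahnSeries Γ R}
    (ha : a ≠ 0) :
    a.orderTop < (a - b).orderTop ↔ b.orderTop = a.orderTop ∧ b.leadingCoeff = a.leadingCoeff := by
  constructor
  · intro h
    rw [← sub_sub_cancel a b]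
    exact ⟨orderTop_sub h, leadingCoeff_sub h⟩
  · rintro ⟨hord, hlc⟩
    rw [orderTop_of_ne_zero ha] at hord ⊢
    exact le_orderTop_of_leadingCoeff_eq (orderTop_of_ne_zero ha) hord hlc.symm

theorem leadingCoeff_sq [AddCommMonoid Γ] [LinearOrder Γ] [IsOrderedCancelAddMonoid Γ]
    [Semiring R] [NoZeroDivisors R] (y : HahnSeries Γ R) :
    (y ^ 2).leadingCoeff = y.leadingCoeff ^ 2 := by
  rw [sq, sq, leadingCoeff_mul]

theorem single_add_self_sq [AddCommMonoid Γ] [PartialOrder Γ] [IsOrderedCancelAddMonoid Γ]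
    [Semiring R] (g : Γ) (s : R) : single g s ^ 2 = single (g + g) (s ^ 2) := by
  rw [single_pow, two_nsmul]

end HahnSeries

open HahnSeries in
/-- Let `k` be a 2-euclidean ordered field (every positive element is a square) and `G` a
2-divisible ordered abelian group. In the Hahn field `k((G))` with canonical valuation
`v = v_min` (here `orderTop`, with `v(0) = ⊤`), an element `a` is nonnegative (i.e. `a = 0`
or its leading coefficient is positive) if and only if `a = 0` or there is `y` with
`v(a - y²) > v(a)`. (Hence the ordering is `∅`-definable in the language of valued fields.) -/
theorem stmt_17 {k G : Type*} [Field k] [LinearOrder k] [IsStrictOrderedRing k]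
    [AddCommGroup G] [LinearOrder G] [IsOrderedAddMonoid G]
    (heuclid : ∀ x : k, 0 < x → ∃ y : k, y ^ 2 = x)
    (hdiv : ∀ g : G, ∃ h : G, h + h = g) :
    ∀ a : HahnSeries G k,
      (a = 0 ∨ 0 < a.leadingCoeff) ↔
      (a = 0 ∨ ∃ y : HahnSeries G k, a.orderTop < (a - y ^ 2).orderTop) := by
  intro a
  rcases eq_or_ne a 0 with rfl | ha
  · simp
  simp only [ha, false_or, orderTop_lt_orderTop_sub_iff ha]
  constructor
  · intro hpos
    obtain ⟨s, hs⟩ := heuclid _ hpos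
    obtain ⟨h, hh⟩ := hdiv a.order
    refine ⟨single h s, ?_⟩
    rw [single_add_self_sq, hh, hs, orderTop_single hpos.ne', leadingCoeff_of_single,
      order_eq_orderTop_of_ne_zero ha]
    exact ⟨rfl, rfl⟩
  · rintro ⟨y, -, hlc⟩
    have hsq : a.leadingCoeff = y.leadingCoeff ^ 2 := by rw [← hlc, leadingCoeff_sq]
    exact hsq ▸ (sq_nonneg _).lt_of_ne' (hsq ▸ leadingCoeff_ne_zero.mpr ha)
end

section
/- Let G be an ordered abelian group such that the extension G ⊆ div(G) is immediate with respect to the natural valuation and the value set of G is order-isomorphic to a subset of ω. Then G is dense in its divisible hull. -/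
/-!
Approximate `d ∈ D` by iterating immediateness: replacing `d` by `d - f b` moves it to a strictly
smaller archimedean class, i.e. strictly raises its rank in `ℕ`. Once the rank exceeds that of
`ε > 0`, what remains is below `ε`, so this happens after finitely many steps. Halving `b - a` in
the divisible group `D` turns these approximations into density.
-/

open ArchimedeanClass

/-- `r` embeds the value set (the archimedean classes of nonzero elements) into `ω`. -/
def IsArchimedeanRank {M : Type*} [AddCommGroup M] [LinearOrder M] [IsOrderedAddMonoid M]
    (r : M → ℕ) : Prop :=
  ∀ a b : M, a ≠ 0 → b ≠ 0 → (mk a < mk b ↔ r a < r b)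

section

variable {M N : Type*} [AddCommGroup M] [LinearOrder M] [IsOrderedAddMonoid M]
  [AddCommGroup N] [LinearOrder N] [IsOrderedAddMonoid N]

theorem ArchimedeanClass.mk_nsmul (a : M) {n : ℕ} (hn : n ≠ 0) : mk (n • a) = mk a := by
  refine mk_eq_mk.2 ⟨⟨1, ?_⟩, ⟨n, by rw [abs_nsmul]⟩⟩
  rw [abs_nsmul, one_nsmul]
  exact le_self_nsmul (abs_nonneg a) hn

theorem ArchimedeanClass.mk_map_lt_mk_map_iff (f : M →+o N) (hf : Function.Injective f)
    {a b : M} : mk (f a) < mk (f b) ↔ mk a < mk b := by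
  rw [← orderHom_mk, ← orderHom_mk]
  exact ((orderHom f).monotone.strictMono_of_injective (orderHom_injective hf)).lt_iff_lt

theorem IsArchimedeanRank.exists_of_hull (f : M →+o N) (hf : Function.Injective f)
    (hhull : ∀ d : N, ∃ (n : ℕ) (g : M), 0 < n ∧ n • d = f g)
    {r : M → ℕ} (hr : IsArchimedeanRank r) : ∃ ρ : N → ℕ, IsArchimedeanRank ρ := by
  choose n g hn hng using hhull
  have hmk : ∀ d, mk d = mk (f (g d)) := fun d => by rw [← hng, mk_nsmul d (hn d).ne']
  have hg : ∀ d, d ≠ 0 → g d ≠ 0 := fun d hd hgd => by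
    apply hd
    rw [← mk_eq_top_iff, hmk, hgd, map_zero, mk_zero]
  refine ⟨fun d => r (g d), fun a b ha hb => ?_⟩
  rw [hmk a, hmk b, mk_map_lt_mk_map_iff f hf]
  exact hr _ _ (hg a ha) (hg b hb)

end

section

variable {G D : Type*} [AddCommGroup G] [AddCommGroup D] [LinearOrder D] [IsOrderedAddMonoid D]

theorem exists_abs_sub_lt_of_immediate (f : G →+ D)
    (himm : ∀ a : D, a ≠ 0 → ∃ b, mk a < mk (a - f b))
    {ρ : D → ℕ} (hρ : IsArchimedeanRank ρ) {ε : D} (hε : 0 < ε) (d : D) :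
    ∃ g, |d - f g| < ε := by
  suffices h : ∀ k d, d ≠ 0 → ρ ε < ρ d + k → ∃ g, |d - f g| < ε by
    rcases eq_or_ne d 0 with rfl | hd
    · exact ⟨0, by simpa using hε⟩
    · exact h (ρ ε + 1) d hd (by omega)
  intro k
  induction k with
  | zero =>
    intro d hd hlt
    have hsmall : mk ε < mk d := (hρ ε d hε.ne' hd).2 hlt
    refine ⟨0, ?_⟩
    simpa [abs_of_pos hε] using mk_lt_mk.1 hsmall 1
  | succ k ih =>
    intro d hd hlt
    obtain ⟨b, hb⟩ := himm d hd
    rcases eq_or_ne (d - f b) 0 with h0 | h0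
    · exact ⟨b, by simpa [h0] using hε⟩
    · have hrank : ρ d < ρ (d - f b) := (hρ d _ hd h0).1 hb
      obtain ⟨g, hg⟩ := ih (d - f b) h0 (by omega)
      exact ⟨b + g, by rwa [map_add, ← sub_sub]⟩

theorem exists_between_of_forall_abs_sub_lt (f : G →+ D)
    (happrox : ∀ ε : D, 0 < ε → ∀ d, ∃ g, |d - f g| < ε)
    (hhalf : ∀ d : D, ∃ e, 2 • e = d) {a b : D} (hab : a < b) :
    ∃ g, a < f g ∧ f g < b := by
  obtain ⟨ε, hε⟩ := hhalf (b - a)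
  have hε0 : 0 < ε := (nsmul_pos_iff two_ne_zero).1 (hε ▸ sub_pos.2 hab)
  obtain ⟨g, hg⟩ := happrox ε hε0 (a + ε)
  rw [two_nsmul] at hε
  obtain ⟨hg₁, hg₂⟩ := abs_sub_lt_iff.1 hg
  refine ⟨g, ?_, ?_⟩
  · rwa [sub_lt_iff_lt_add, add_comm ε, add_lt_add_iff_right] at hg₁
  · rw [sub_lt_iff_lt_add] at hg₂
    calc f g < ε + (a + ε) := hg₂
      _ = a + (ε + ε) := by abel
      _ = b := by rw [hε, add_sub_cancel]

end

/-- Let `G` be an ordered abelian group such that the extension `G ⊆ div(G)` is immediate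
with respect to the natural valuation and the value set of `G` is order-isomorphic to a
subset of `ω`. Then `G` is dense in its divisible hull. Here the divisible hull is modelled
by a divisible ordered abelian group `D` together with an order-embedding `f : G →+ D` such
that every element of `D` has a positive multiple in the image of `f`; immediateness says
that every nonzero `a ∈ D` admits `b ∈ G` with `v(a - f b) > v(a)`, i.e. `a - f b`
archimedean strictly smaller than `a`; the value-set condition is expressed by a rank
function `r : G → ℕ` reversing the archimedean comparison. -/
theorem stmt_18 {G D : Type*} [AddCommGroup G] [LinearOrder G] [IsOrderedAddMonoid G]
    [AddCommGroup D] [LinearOrder D] [IsOrderedAddMonoid D]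
    (f : G →+ D) (hf : StrictMono f)
    (hdivD : ∀ (d : D) (n : ℕ), 0 < n → ∃ e : D, n • e = d)
    (hhull : ∀ d : D, ∃ (n : ℕ) (g : G), 0 < n ∧ n • d = f g)
    (himm : ∀ a : D, a ≠ 0 → ∃ b : G, ∀ n : ℕ, n • |a - f b| < |a|)
    (hω : ∃ r : G → ℕ, ∀ g h : G, g ≠ 0 → h ≠ 0 →
      ((∀ n : ℕ, n • |h| < |g|) ↔ r g < r h)) :
    ∀ a b : D, a < b → ∃ g : G, a < f g ∧ f g < b := by
  obtain ⟨r, hr⟩ := hω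
  let F : G →+o D := { f with monotone' := hf.monotone }
  have himm' : ∀ a : D, a ≠ 0 → ∃ b, mk a < mk (a - f b) := by
    simpa only [mk_lt_mk] using himm
  have hrank : IsArchimedeanRank r := by
    simpa only [IsArchimedeanRank, mk_lt_mk] using hr
  obtain ⟨ρ, hρ⟩ := hrank.exists_of_hull F hf.injective hhull
  intro a b hab
  exact exists_between_of_forall_abs_sub_lt f
    (fun ε hε => exists_abs_sub_lt_of_immediate f himm' hρ hε)
    (fun d => hdivD d 2 two_pos) hab
end

section
/- If an ordered field (K,<) is not real closed but is dense in its real closure, then K admits no nontrivial henselian valuation. -/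
open Polynomial Finset


private lemma evalAbsBound {F : Type*} [Field F] [LinearOrder F] [IsStrictOrderedRing F] (h : Polynomial F) {B u : F}
    (hB : 0 ≤ B) (hu : |u| ≤ B) {N : ℕ} (hN : h.natDegree < N) :
    |h.eval u| ≤ ∑ i ∈ Finset.range N, |h.coeff i| * B ^ i := by
  rw [Polynomial.eval_eq_sum_range' hN]
  refine (Finset.abs_sum_le_sum_abs _ _).trans (Finset.sum_le_sum fun i _ => ?_)
  rw [abs_mul, abs_pow]
  exact mul_le_mul_of_nonneg_left (pow_le_pow_left₀ (abs_nonneg u) hu i) (abs_nonneg _)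

private lemma lipschitzAt {F : Type*} [Field F] [LinearOrder F] [IsStrictOrderedRing F] (Q : Polynomial F) (β : F) :
    ∃ L : F, 0 < L ∧ ∀ u : F, |u - β| ≤ 1 → |Q.eval u - Q.eval β| ≤ L * |u - β| := by
  set h := Q /ₘ (X - C β) with hh
  refine ⟨(∑ i ∈ Finset.range (h.natDegree + 1), |h.coeff i| * (|β| + 1) ^ i) + 1, ?_, ?_⟩
  · have : (0:F) ≤ ∑ i ∈ Finset.range (h.natDegree + 1), |h.coeff i| * (|β| + 1) ^ i :=
      Finset.sum_nonneg fun i _ => mul_nonneg (abs_nonneg _) (pow_nonneg (by positivity) i)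
    linarith
  · intro u hu
    have key : ∀ v : F, Q.eval v = (v - β) * h.eval v + Q.eval β := by
      intro v
      have h2 := congrArg (Polynomial.eval v) (Polynomial.modByMonic_add_div Q (X - C β))
      simp only [Polynomial.modByMonic_X_sub_C_eq_C_eval, Polynomial.eval_add, Polynomial.eval_mul,
        Polynomial.eval_sub, Polynomial.eval_X, Polynomial.eval_C] at h2
      rw [← h2]; ring
    have hub : |u| ≤ |β| + 1 := by
      have := abs_sub_abs_le_abs_sub u β
      linarith
    have hbound := evalAbsBound h (by positivity) hub (lt_add_one h.natDegree)
    have h3 : |Q.eval u - Q.eval β| = |h.eval u| * |u - β| := by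
      rw [key u]; rw [add_sub_cancel_right, abs_mul]; ring
    rw [h3]
    have := abs_nonneg (u - β)
    nlinarith



set_option maxHeartbeats 1000000 in
/-- If an ordered field `(K,<)` is not real closed (its real closure `R`, modelled by a real
closed field with an order-preserving embedding `f` with algebraic image, is a proper
extension) but is dense in its real closure, then `K` admits no nontrivial henselian
valuation: every henselian valuation subring of `K` is all of `K`. -/
theorem stmt_19 {K R : Type*} [Field K] [LinearOrder K] [IsStrictOrderedRing K]
    [Field R] [LinearOrder R] [IsStrictOrderedRing R]
    (hR : IsRealClosedField R) (f : K →+* R) (hf : StrictMono f)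
    (halg : ∀ x : R, ∃ p : Polynomial K, p ≠ 0 ∧ p.eval₂ f x = 0)
    (hnotrc : ¬ Function.Surjective f)
    (hdense : ∀ a b : R, a < b → ∃ x : K, a < f x ∧ f x < b) :
    ∀ O : ValuationSubring K, HenselianLocalRing O → O = ⊤ := by
  intro O hO
  by_contra hne
  have hex : ∃ u0 : K, u0 ∉ O := by
    by_contra h
    push_neg at h
    exact hne (by ext x; simp [h x, ValuationSubring.mem_top])
  obtain ⟨u0, hu0⟩ := hex
  have hmemK : ∀ x : K, x ∈ O ∨ x⁻¹ ∈ O := O.mem_or_inv_mem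
  have hunit : ∀ a : O, IsUnit a ↔ ((a : K) ≠ 0 ∧ (a : K)⁻¹ ∈ O) := by
    intro a
    constructor
    · intro ha
      obtain ⟨u, hu⟩ := ha
      have hK : ((u : O) : K) * (((u⁻¹ : Oˣ) : O) : K) = 1 := by
        have : ((u * u⁻¹ : Oˣ) : O) = 1 := by simp
        exact_mod_cast congrArg (Subtype.val) this
      have hb0 : ((u : O) : K) ≠ 0 := by
        intro h; rw [h, zero_mul] at hK; exact zero_ne_one hK
      have hinv : (((u : O) : K))⁻¹ = (((u⁻¹ : Oˣ) : O) : K) :=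
        inv_eq_of_mul_eq_one_right hK
      rw [← hu]
      exact ⟨hb0, hinv ▸ ((u⁻¹ : Oˣ) : O).2⟩
    · rintro ⟨h0, hinv⟩
      exact IsUnit.of_mul_eq_one (a := a) ⟨_, hinv⟩ (Subtype.ext (mul_inv_cancel₀ h0))
  have hmaxmem : ∀ a : O, a ∈ IsLocalRing.maximalIdeal O ↔ ((a:K) = 0 ∨ (a:K)⁻¹ ∉ O) := by
    intro a
    rw [IsLocalRing.mem_maximalIdeal, mem_nonunits_iff, hunit a]
    tauto
  have hquarter : ∀ a : O, a ∈ IsLocalRing.maximalIdeal O → |(a : K)| ≤ 1/4 := by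
    have key : ∀ b : O, b ∈ IsLocalRing.maximalIdeal O → -(1/4 : K) ≤ (b:K) := by
      intro b hb
      have hmon : (X^2 + X - C b : Polynomial O).Monic := by monicity!
      have hev : (X^2 + X - C b : Polynomial O).eval 0 ∈ IsLocalRing.maximalIdeal O := by
        simpa using neg_mem hb
      have hder : IsUnit ((derivative (X^2 + X - C b : Polynomial O)).eval 0) := by
        simp [derivative_sub, derivative_pow]
      obtain ⟨r, hr, -⟩ := hO.is_henselian _ hmon 0 hev hder
      have hrK : ((r:K))^2 + (r:K) - (b:K) = 0 := by
        have := congrArg (Subtype.val) hr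
        push_cast at this
        simpa using this
      nlinarith [sq_nonneg (2*(r:K)+1)]
    intro a ha
    have h1 := key a ha
    have h2 := key (-a) (neg_mem ha)
    push_cast at h2
    rw [abs_le]; constructor <;> linarith
  have hsmall : ∀ x : K, |x| ≤ 1 → x ∈ O := by
    intro x hx
    by_cases hxO : x ∈ O
    · exact hxO
    by_cases hx0 : x = 0
    · rw [hx0]; exact zero_mem _
    have hinvO : x⁻¹ ∈ O := (hmemK x).resolve_left hxO
    have hm : (⟨x⁻¹, hinvO⟩ : O) ∈ IsLocalRing.maximalIdeal O :=
      (hmaxmem _).mpr (Or.inr (by rw [inv_inv]; exact hxO))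
    have h14 := hquarter _ hm
    have habs : |x| * |x⁻¹| = 1 := by rw [← abs_mul, mul_inv_cancel₀ hx0, abs_one]
    have : (0:K) < |x| := abs_pos.2 hx0
    nlinarith
  have hconv : ∀ x y : K, y ∈ O → |x| ≤ |y| → x ∈ O := by
    intro x y hy hxy
    by_cases hy0 : y = 0
    · have : x = 0 := by rw [hy0] at hxy; simpa using abs_eq_zero.mp (le_antisymm (by simpa using hxy) (abs_nonneg x))
      rw [this]; exact zero_mem _
    have h1 : x / y ∈ O := by
      apply hsmall
      rw [abs_div, div_le_one (abs_pos.2 hy0)]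
      exact hxy
    have := mul_mem h1 hy
    rwa [div_mul_cancel₀ x hy0] at this
  have hmconv : ∀ (x : K) (b : O), b ∈ IsLocalRing.maximalIdeal O → |x| ≤ |(b:K)| →
      ∃ hx : x ∈ O, (⟨x, hx⟩ : O) ∈ IsLocalRing.maximalIdeal O := by
    intro x b hb hxb
    have hxO : x ∈ O := hconv x b b.2 hxb
    refine ⟨hxO, (hmaxmem _).mpr ?_⟩
    by_cases hx0 : x = 0
    · exact Or.inl hx0
    refine Or.inr fun hinvO => ?_
    have hb0 : (b:K) ≠ 0 := by
      intro h
      rw [h, abs_zero] at hxb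
      exact hx0 (abs_eq_zero.mp (le_antisymm hxb (abs_nonneg x)))
    have hbinvO : (b:K)⁻¹ ∈ O := by
      apply hconv _ _ hinvO
      rw [abs_inv, abs_inv]
      exact inv_anti₀ (abs_pos.2 hx0) hxb
    have : IsUnit b := (hunit b).mpr ⟨hb0, hbinvO⟩
    exact (mem_nonunits_iff.mp ((IsLocalRing.mem_maximalIdeal b).mp hb)) this
  -- a positive element of the maximal ideal
  have hu0ne : u0 ≠ 0 := fun h => hu0 (h ▸ zero_mem _)
  have hu0inv : u0⁻¹ ∈ O := (hmemK u0).resolve_left hu0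
  have hτ0mem : (⟨u0⁻¹, hu0inv⟩ : O) ∈ IsLocalRing.maximalIdeal O :=
    (hmaxmem _).mpr (Or.inr (by rw [inv_inv]; exact hu0))
  obtain ⟨hτO, hτm⟩ := hmconv |u0⁻¹| _ hτ0mem (le_of_eq (abs_abs _))
  set τ : K := |u0⁻¹| with hτdef
  have hτpos : 0 < τ := abs_pos.2 (inv_ne_zero hu0ne)
  have hτ14 : τ ≤ 1/4 := by
    have := hquarter _ hτm
    rwa [abs_abs] at this
  clear_value τ
  -- R side
  have hfabs : ∀ x : K, f |x| = |f x| := by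
    intro x
    rcases le_or_gt 0 x with h | h
    · rw [abs_of_nonneg h, abs_of_nonneg (by rw [← map_zero f]; exact hf.monotone h)]
    · rw [abs_of_neg h, map_neg, abs_of_neg (by rw [← map_zero f]; exact hf h)]
  rw [Function.Surjective] at hnotrc
  push_neg at hnotrc
  obtain ⟨α, hα⟩ := hnotrc
  letI : Algebra K R := f.toAlgebra
  have hint : IsIntegral K α := by
    obtain ⟨p, hp0, hpe⟩ := halg α
    exact isAlgebraic_iff_isIntegral.mp ⟨p, hp0, by rwa [aeval_def]⟩
  set p : Polynomial K := minpoly K α with hpdef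
  have hpmonic : p.Monic := minpoly.monic hint
  have hpne : p ≠ 0 := hpmonic.ne_zero
  set n := p.natDegree with hndef
  have hn1 : 1 ≤ n := minpoly.natDegree_pos hint
  have haev : Polynomial.aeval α p = 0 := minpoly.aeval K α
  have hroot : ∀ y : K, p.eval y = 0 → False := by
    intro y hy
    have hfac : (X - C y) * (p /ₘ (X - C y)) = p := mul_divByMonic_eq_iff_isRoot.mpr hy
    have h2 := congrArg (Polynomial.aeval α) hfac
    rw [haev, map_mul, map_sub, aeval_X, aeval_C] at h2
    rcases mul_eq_zero.mp h2 with h | h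
    · exact hα y (sub_eq_zero.mp h).symm
    · have hg2ne : p /ₘ (X - C y) ≠ 0 := by
        intro h0; rw [h0, mul_zero] at hfac; exact hpne hfac.symm
      have hdlt : (p /ₘ (X - C y)).degree < p.degree :=
        degree_divByMonic_lt p (X - C y) hpne (by rw [degree_X_sub_C]; norm_num)
      exact absurd (minpoly.degree_le_of_ne_zero K α hg2ne h) (not_le.mpr hdlt)
  have hn2 : 2 ≤ n := by
    by_contra h
    have hn1' : n = 1 := by omega
    have hp1 : p = X + C (p.coeff 0) := hpmonic.eq_X_add_C hn1'
    exact hroot (-(p.coeff 0)) (by rw [hp1]; simp)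
  set p' := derivative p with hp'def
  have hp'0 : p' ≠ 0 := by
    intro h
    have := natDegree_eq_zero_of_derivative_eq_zero h
    omega
  have hp'α : Polynomial.aeval α p' ≠ 0 := by
    intro h
    have hle := minpoly.degree_le_of_ne_zero K α hp'0 h
    exact absurd hle (not_le.mpr (degree_derivative_lt hpne))
  clear_value p' 
  -- bound b0 for |α|
  obtain ⟨b0, hb0l, -⟩ := hdense (|α| + 1) (|α| + 2) (by linarith)
  have hb0pos : 0 < b0 := by
    have h0 : f 0 < f b0 := by
      rw [map_zero]
      have := abs_nonneg α
      linarith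
    exact hf.lt_iff_lt.mp h0
  -- uniform bound T on taylor coefficients
  set T : K := ∑ k ∈ Finset.range (n+1), ∑ j ∈ Finset.range (n+1),
      (((j+k).choose k : K) * |p.coeff (j+k)| * b0 ^ j) with hTdef
  have hinner_nonneg : ∀ k : ℕ, (0:K) ≤ ∑ j ∈ Finset.range (n+1),
      (((j+k).choose k : K) * |p.coeff (j+k)| * b0 ^ j) := by
    intro k
    exact Finset.sum_nonneg fun j _ => by positivity
  have hTbound : ∀ x : K, |x| ≤ b0 → ∀ k, k ≤ n →
      |(Polynomial.taylor x p).coeff k| ≤ T := by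
    intro x hx k hk
    rw [Polynomial.taylor_coeff]
    have h1 : |(Polynomial.hasseDeriv k p).eval x| ≤
        ∑ j ∈ Finset.range (n+1), |(Polynomial.hasseDeriv k p).coeff j| * b0 ^ j := by
      apply evalAbsBound _ (le_trans (abs_nonneg x) hx) hx
      have := Polynomial.natDegree_hasseDeriv_le p k
      omega
    refine h1.trans ?_
    have h2 : ∑ j ∈ Finset.range (n+1), |(Polynomial.hasseDeriv k p).coeff j| * b0 ^ j
        = ∑ j ∈ Finset.range (n+1), (((j+k).choose k : K) * |p.coeff (j+k)| * b0 ^ j) := by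
      refine Finset.sum_congr rfl fun j _ => ?_
      rw [Polynomial.hasseDeriv_coeff, abs_mul, Nat.abs_cast]
    rw [h2]
    exact Finset.single_le_sum (fun i _ => hinner_nonneg i) (Finset.mem_range.mpr (by omega))
  have hT1 : 1 ≤ T := by
    have h := hTbound 0 (by simpa using hb0pos.le) n le_rfl
    rw [Polynomial.taylor_zero] at h
    have : p.coeff n = 1 := hpmonic.coeff_natDegree
    rw [this] at h
    simpa using h
  have hTpos : 0 < T := lt_of_lt_of_le one_pos hT1
  clear_value T
  -- delta and d
  set δ : R := |Polynomial.aeval α p'| with hδdef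
  have hδpos : 0 < δ := abs_pos.2 hp'α
  obtain ⟨d, hd1, hd2⟩ := hdense 0 (δ/2) (half_pos hδpos)
  have hdpos : 0 < d := hf.lt_iff_lt.mp (by rwa [map_zero])
  -- e and ε
  set e : K := min (d / T) 1 with hedef
  have hepos : 0 < e := lt_min (by positivity) one_pos
  have he1 : e ≤ 1 := min_le_right _ _
  have heT : e * T ≤ d := by
    calc e * T ≤ (d/T) * T := by
          have := min_le_left (d/T) 1
          nlinarith
    _ = d := div_mul_cancel₀ d (ne_of_gt hTpos)
  set ε : K := e * d * τ with hεdef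
  have hεpos : 0 < ε := by positivity
  clear_value e ε
  -- Lipschitz data
  set P : Polynomial R := p.map f with hPdef
  set P' : Polynomial R := p'.map f with hP'def2
  have hPα : P.eval α = 0 := by
    rw [hPdef, Polynomial.eval_map]; exact haev
  have hP'αv : |P'.eval α| = δ := by
    rw [hP'def2, Polynomial.eval_map, hδdef, aeval_def]; rfl
  obtain ⟨LP, hLPpos, hLP⟩ := lipschitzAt P α
  obtain ⟨LQ, hLQpos, hLQ⟩ := lipschitzAt P' α
  have hfε : 0 < f ε := by rw [← map_zero f]; exact hf hεpos
  have hfd : 0 < f d := by rw [← map_zero f]; exact hf hdpos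
  set ρ : R := min 1 (min (f d / LQ) (f ε / LP)) with hρdef
  have hρpos : 0 < ρ := lt_min one_pos (lt_min (by positivity) (by positivity))
  -- choose x
  obtain ⟨x, hx1, hx2⟩ := hdense (α - ρ) (α + ρ) (by linarith)
  have hxd : |f x - α| < ρ := by rw [abs_sub_lt_iff]; constructor <;> linarith
  have hxd1 : |f x - α| ≤ 1 := le_trans hxd.le (min_le_left _ _)
  have hxb : |x| ≤ b0 := by
    have h1 : |f x| ≤ |α| + 1 := by
      have := abs_sub_abs_le_abs_sub (f x) α
      linarith
    have h2 : f |x| ≤ f b0 := by rw [hfabs]; linarith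
    exact hf.le_iff_le.mp h2
  have hpx : |p.eval x| ≤ ε := by
    have h1 := hLP (f x) hxd1
    rw [hPα, sub_zero] at h1
    have hρP : ρ ≤ f ε / LP := le_trans (min_le_right _ _) (min_le_right _ _)
    have h2 : |P.eval (f x)| ≤ f ε := by
      calc |P.eval (f x)| ≤ LP * |f x - α| := h1
        _ ≤ LP * (f ε / LP) := by nlinarith [hxd.le.trans hρP]
        _ = f ε := by field_simp
    have hev : P.eval (f x) = f (p.eval x) := by
      rw [hPdef, Polynomial.eval_map, Polynomial.eval₂_at_apply]
    rw [hev, ← hfabs] at h2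
    exact hf.le_iff_le.mp h2
  set c : K := p'.eval x with hcdef
  have hcd : d ≤ |c| := by
    have h1 := hLQ (f x) hxd1
    have hρQ : ρ ≤ f d / LQ := le_trans (min_le_right _ _) (min_le_left _ _)
    have h2 : |P'.eval (f x) - P'.eval α| ≤ f d := by
      calc |P'.eval (f x) - P'.eval α| ≤ LQ * |f x - α| := h1
        _ ≤ LQ * (f d / LQ) := by nlinarith [hxd.le.trans hρQ]
        _ = f d := by field_simp
    have h3 : f d ≤ |P'.eval (f x)| := by
      have hδ2 : 2 * f d < δ := by linarith
      have := abs_sub_abs_le_abs_sub (P'.eval α) (P'.eval (f x))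
      rw [hP'αv] at this
      rw [abs_sub_comm] at h2
      linarith
    have hev : P'.eval (f x) = f (p'.eval x) := by
      rw [hP'def2, Polynomial.eval_map, Polynomial.eval₂_at_apply]
    rw [hev, ← hfabs] at h3
    exact hf.le_iff_le.mp h3
  have hc0 : c ≠ 0 := by
    intro h
    rw [h, abs_zero] at hcd
    linarith
  clear_value c
  set t := Polynomial.taylor x p with htdef
  have htn : t.natDegree = n := Polynomial.natDegree_taylor p x
  have ht0 : t.coeff 0 = p.eval x := Polynomial.taylor_coeff_zero x p
  have ht1 : t.coeff 1 = c := by rw [hcdef, hp'def]; exact Polynomial.taylor_coeff_one x p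
  by_cases hpx0 : p.eval x = 0
  · exact hroot x hpx0
  have hec : e * c ≠ 0 := mul_ne_zero (ne_of_gt hepos) hc0
  set b : ℕ → K := fun k => t.coeff k * e ^ k / (e * c) with hbdef
  have hb1 : b 1 = 1 := by
    rw [hbdef]
    simp only [ht1, pow_one]
    field_simp
  have hb0v : b 0 = p.eval x / (e * c) := by
    rw [hbdef]; simp only [ht0, pow_zero, mul_one]
  have hb0ne : b 0 ≠ 0 := by rw [hb0v]; exact div_ne_zero hpx0 hec
  have hb0τ : |b 0| ≤ τ := by
    rw [hb0v, abs_div, div_le_iff₀ (abs_pos.2 hec)]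
    have h1 : e * d ≤ |e * c| := by
      rw [abs_mul, abs_of_pos hepos]
      nlinarith [hcd, hepos.le]
    calc |p.eval x| ≤ e * d * τ := hεdef ▸ hpx
      _ = τ * (e * d) := by ring
      _ ≤ τ * |e * c| := mul_le_mul_of_nonneg_left h1 hτpos.le
  obtain ⟨hb0O, hb0m⟩ := hmconv (b 0) _ hτm (by rw [abs_abs, ← hτdef]; exact hb0τ)
  have hbk : ∀ k, 2 ≤ k → k ≤ n → |b k| ≤ 1 := by
    intro k h2 hkn
    rw [hbdef]
    simp only
    rw [abs_div, abs_mul, abs_pow, abs_of_pos hepos, div_le_one (by positivity)]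
    have h1 : |t.coeff k| ≤ T := hTbound x hxb k hkn
    have h2' : e ^ k ≤ e * e := by
      have h := pow_le_pow_of_le_one hepos.le he1 h2
      calc e ^ k ≤ e ^ 2 := h
        _ = e * e := pow_two e
    calc |t.coeff k| * e ^ k ≤ T * (e * e) :=
          mul_le_mul h1 h2' (pow_pos hepos k).le hTpos.le
      _ = (e * T) * e := by ring
      _ ≤ d * e := mul_le_mul_of_nonneg_right heT hepos.le
      _ ≤ |c| * e := mul_le_mul_of_nonneg_right hcd hepos.le
      _ = e * |c| := mul_comm _ _
      _ = |e * c| := by rw [abs_mul, abs_of_pos hepos]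
  clear_value t b
  -- the reversed Newton polynomial
  set ch : ℕ → K := fun j => if j = n then 1 else if j = n - 1 then 1
      else b (n - j) * (b 0)^(n - j - 1) with hchdef
  have hchmem : ∀ j, ch j ∈ O := by
    intro j
    rw [hchdef]
    simp only
    split
    · exact one_mem _
    · split
      · exact one_mem _
      · rename_i hj1 hj2
        rcases Nat.lt_or_ge j n with hjn | hjn
        · have hk2 : 2 ≤ n - j := by omega
          have hkn : n - j ≤ n := by omega
          exact mul_mem (hsmall _ (hbk _ hk2 hkn)) (pow_mem hb0O _)
        · have : n - j = 0 := by omega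
          rw [this]
          simpa using mul_mem hb0O (pow_mem hb0O (0-1))
  set GC : ℕ → O := fun j => ⟨ch j, hchmem j⟩ with hGCdef
  set G : Polynomial O := ∑ j ∈ Finset.range (n+1), Polynomial.monomial j (GC j) with hGdef
  have hGcoeff : ∀ j, G.coeff j = if j ∈ Finset.range (n+1) then GC j else 0 := by
    intro j
    rw [hGdef, Polynomial.finset_sum_coeff]
    simp only [Polynomial.coeff_monomial]
    exact Finset.sum_ite_eq' (Finset.range (n+1)) j GC
  have hGdeg : G.natDegree ≤ n := by
    rw [Polynomial.natDegree_le_iff_coeff_eq_zero]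
    intro N hN
    rw [hGcoeff N, if_neg (by simp; omega)]
  have hchn : ch n = 1 := by rw [hchdef]; simp
  have hGmonic : G.Monic := by
    apply Polynomial.monic_of_natDegree_le_of_coeff_eq_one n hGdeg
    rw [hGcoeff n, if_pos (Finset.mem_range.mpr (by omega))]
    exact Subtype.ext hchn
  have hGeval : ∀ z : O, ((G.eval z : O) : K) = ∑ j ∈ Finset.range (n+1), ch j * (z:K)^j := by
    intro z
    rw [hGdef, Polynomial.eval_finset_sum]
    rw [AddSubmonoidClass.coe_finset_sum]
    refine Finset.sum_congr rfl fun j _ => ?_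
    rw [Polynomial.eval_monomial]
    push_cast
    rfl
  have hGCval : ∀ j, ((GC j : O) : K) = ch j := fun j => rfl
  clear_value ch GC G
  obtain ⟨m, hm⟩ : ∃ m, n = m + 2 := ⟨n - 2, by omega⟩
  have hb0small : |b 0| ≤ 1 := le_trans hb0τ (by linarith)
  have hchm1 : ch (m+1) = 1 := by
    rw [hchdef]; simp only
    rw [if_neg (by omega), if_pos (by omega)]
  have hchm2 : ch (m+2) = 1 := by
    rw [hchdef]; simp only
    rw [if_pos (by omega)]
  have hchsmall : ∀ j, j ≤ m → |ch j| ≤ |b 0| := by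
    intro j hj
    rw [hchdef]; simp only
    rw [if_neg (by omega), if_neg (by omega)]
    rw [abs_mul, abs_pow]
    have h1 : |b (n-j)| ≤ 1 := hbk _ (by omega) (by omega)
    have h2 : |b 0| ^ (n - j - 1) ≤ |b 0| :=
      pow_le_of_le_one (abs_nonneg _) hb0small (by omega)
    calc |b (n-j)| * |b 0| ^ (n-j-1) ≤ 1 * |b 0| :=
          mul_le_mul h1 h2 (by positivity) one_pos.le
      _ = |b 0| := one_mul _
  -- eval at -1 lies in the maximal ideal
  have hvm1 : ((G.eval (-1) : O) : K) = ∑ j ∈ Finset.range (n+1), ch j * (-1:K)^j := by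
    rw [hGeval (-1)]
    norm_num
  set S : K := ∑ j ∈ Finset.range (m+1), ch j * (-1:K)^j with hSdef
  have hsplit : ∑ j ∈ Finset.range (n+1), ch j * (-1:K)^j
      = S + ch (m+1) * (-1:K)^(m+1) + ch (m+2) * (-1:K)^(m+2) := by
    rw [hm, Finset.sum_range_succ, Finset.sum_range_succ]
  have hSb : |S| ≤ (m+1 : K) * |b 0| := by
    calc |S| ≤ ∑ j ∈ Finset.range (m+1), |ch j * (-1:K)^j| :=
          Finset.abs_sum_le_sum_abs _ _
      _ ≤ ∑ _j ∈ Finset.range (m+1), |b 0| := by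
          refine Finset.sum_le_sum fun j hj => ?_
          rw [abs_mul, abs_pow, abs_neg, abs_one, one_pow, mul_one]
          exact hchsmall j (by simpa using Nat.lt_succ_iff.mp (Finset.mem_range.mp hj))
      _ = (m+1 : K) * |b 0| := by
          rw [Finset.sum_const, Finset.card_range, nsmul_eq_mul]
          push_cast; ring
  have hw0m : (((m+1 : ℕ) : O) * ⟨b 0, hb0O⟩) ∈ IsLocalRing.maximalIdeal O :=
    Ideal.mul_mem_left _ _ hb0m
  obtain ⟨hSO, hSm⟩ := hmconv S _ hw0m (by
    push_cast
    rw [abs_mul]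
    calc |S| ≤ (m+1 : K) * |b 0| := hSb
      _ = |(m+1 : K)| * |b 0| := by rw [abs_of_nonneg (by positivity : (0:K) ≤ (m+1:K))]
    )
  have hGm1 : G.eval (-1) ∈ IsLocalRing.maximalIdeal O := by
    have hv : ((G.eval (-1) : O) : K) = S := by
      rw [hvm1, hsplit, hchm1, hchm2, one_mul, one_mul, pow_succ]
      ring
    have : G.eval (-1) = ⟨S, hSO⟩ := Subtype.ext hv
    rw [this]; exact hSm
  -- derivative at -1 is a unit
  have hdval : (((derivative G).eval (-1) : O) : K)
      = ∑ j ∈ Finset.range (n+1), ch j * j * (-1:K)^(j-1) := by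
    rw [hGdef, derivative_sum]
    rw [Polynomial.eval_finset_sum, AddSubmonoidClass.coe_finset_sum]
    refine Finset.sum_congr rfl fun j _ => ?_
    rw [Polynomial.derivative_monomial, Polynomial.eval_monomial]
    push_cast
    rw [hGCval j]
  set S' : K := ∑ j ∈ Finset.range (m+1), ch j * j * (-1:K)^(j-1) with hS'def
  have hS'b : |S'| ≤ ((m+1:K) * m) * |b 0| := by
    calc |S'| ≤ ∑ j ∈ Finset.range (m+1), |ch j * j * (-1:K)^(j-1)| :=
          Finset.abs_sum_le_sum_abs _ _
      _ ≤ ∑ _j ∈ Finset.range (m+1), (m:K) * |b 0| := by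
          refine Finset.sum_le_sum fun j hj => ?_
          rw [abs_mul, abs_pow, abs_neg, abs_one, one_pow, mul_one, abs_mul]
          have hj' : j ≤ m := Nat.lt_succ_iff.mp (Finset.mem_range.mp hj)
          have h1 : |ch j| ≤ |b 0| := hchsmall j hj'
          have h2 : |(j:K)| ≤ (m:K) := by
            rw [Nat.abs_cast]; exact_mod_cast hj'
          calc |ch j| * |(j:K)| ≤ |b 0| * (m:K) :=
                mul_le_mul h1 h2 (abs_nonneg _) (abs_nonneg _)
            _ = (m:K) * |b 0| := mul_comm _ _
      _ = ((m+1:K) * m) * |b 0| := by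
          rw [Finset.sum_const, Finset.card_range, nsmul_eq_mul]
          push_cast; ring
  have hw1m : ((((m+1) * m : ℕ) : O) * ⟨b 0, hb0O⟩) ∈ IsLocalRing.maximalIdeal O :=
    Ideal.mul_mem_left _ _ hb0m
  obtain ⟨hS'O, hS'm⟩ := hmconv S' _ hw1m (by
    push_cast
    rw [abs_mul]
    calc |S'| ≤ ((m+1:K) * m) * |b 0| := hS'b
      _ = |(m+1:K) * m| * |b 0| := by
          rw [abs_of_nonneg (by positivity : (0:K) ≤ (m+1:K) * m)]
    )
  have hS'14 : |S'| ≤ 1/4 := by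
    have := hquarter _ hS'm
    simpa using this
  have hdsplit : (((derivative G).eval (-1) : O) : K) = S' + (-1:K)^(m+1) := by
    rw [hdval, hm, Finset.sum_range_succ, Finset.sum_range_succ, hchm1, hchm2]
    have e1 : (m + 1 : ℕ) - 1 = m := by omega
    have e2 : (m + 2 : ℕ) - 1 = m + 1 := by omega
    rw [e1, e2]
    push_cast
    rw [pow_succ]
    ring
  set v' : K := (((derivative G).eval (-1) : O) : K) with hv'def
  have hv'big : 1/2 ≤ |v'| := by
    have h1 : |(-1:K)^(m+1)| = 1 := by
      rw [abs_pow, abs_neg, abs_one, one_pow]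
    have h2 := abs_sub_abs_le_abs_sub ((-1:K)^(m+1)) (-(S'))
    have h3 : |(-1:K)^(m+1) - -S'| = |v'| := by
      rw [hdsplit]; ring_nf
    rw [h3, h1, abs_neg] at h2
    linarith
  have hv'ne : v' ≠ 0 := by
    intro h
    rw [h, abs_zero] at hv'big
    linarith
  have h2O : (2:K) ∈ O := by
    have := add_mem (one_mem O) (one_mem O)
    rw [one_add_one_eq_two] at this
    exact this
  have hv'invO : v'⁻¹ ∈ O := by
    apply hconv _ 2 h2O
    rw [abs_inv]
    have h2abs : |(2:K)| = 2 := by norm_num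
    rw [h2abs]
    calc |v'|⁻¹ ≤ ((1:K)/2)⁻¹ := by
          apply inv_anti₀ (by norm_num) hv'big
      _ = 2 := by norm_num
  have hGder : IsUnit ((derivative G).eval (-1)) :=
    (hunit _).mpr ⟨hv'ne, hv'invO⟩
  -- apply Hensel's lemma
  obtain ⟨z, hz1, hz2⟩ := hO.is_henselian G hGmonic (-1) hGm1 hGder
  set zk : K := ((z : O) : K) with hzkdef
  have hz2' : |zk + 1| ≤ 1/4 := by
    have := hquarter _ hz2
    simpa [sub_neg_eq_add] using this
  have hzk0 : zk ≠ 0 := by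
    intro h
    rw [h, zero_add, abs_one] at hz2'
    linarith
  set w : K := zk⁻¹ with hwdef
  have hzw : zk * w = 1 := mul_inv_cancel₀ hzk0
  have hrootK : ∑ j ∈ Finset.range (n+1), ch j * zk^j = 0 := by
    have h1 : ((G.eval z : O) : K) = 0 := by rw [hz1]; rfl
    rw [hGeval z] at h1
    exact h1
  -- the root of p
  apply hroot (x + e * (b 0 * w))
  have h1 : p.eval (x + e * (b 0 * w))
      = ∑ k ∈ Finset.range (n+1), t.coeff k * (e * (b 0 * w))^k := by
    have h2 : p.eval (e * (b 0 * w) + x) = t.eval (e * (b 0 * w)) := by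
      rw [htdef]; exact (Polynomial.taylor_eval x p _).symm
    rw [add_comm x, h2, Polynomial.eval_eq_sum_range' (show t.natDegree < n+1 by omega)]
  rw [h1]
  have hch_n1 : ch (n-1) = 1 := by
    rw [show n - 1 = m + 1 by omega]
    exact hchm1
  have key : ∀ k ∈ Finset.range (n+1), t.coeff k * (e * (b 0 * w))^k
      = (e * c * b 0) * (ch (n - k) * w^k) := by
    intro k hk
    have hkn : k ≤ n := Nat.lt_succ_iff.mp (Finset.mem_range.mp hk)
    match k, hkn with
    | 0, _ =>
      rw [pow_zero, Nat.sub_zero, hchn, pow_zero, mul_one, mul_one, mul_one, ht0, hb0v]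
      field_simp
    | 1, _ =>
      rw [show n - 1 = m + 1 by omega, hchm1, ht1, one_mul, pow_one, pow_one]
      ring
    | (k'+2), hkn =>
      have hch : ch (n - (k'+2)) = b (k'+2) * (b 0)^(k'+1) := by
        rw [hchdef]
        simp only
        rw [if_neg (by omega), if_neg (by omega), show n - (n - (k'+2)) = k'+2 by omega,
          show k' + 2 - 1 = k'+1 by omega]
      have hbk2 : b (k'+2) = t.coeff (k'+2) * e ^ (k'+2) / (e * c) := by rw [hbdef]
      rw [hch, hbk2]
      field_simp
      ring
  rw [Finset.sum_congr rfl key, ← Finset.mul_sum]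
  have hrefl : ∑ k ∈ Finset.range (n+1), ch (n-k) * w^k
      = ∑ j ∈ Finset.range (n+1), ch j * w^(n-j) := by
    rw [← Finset.sum_range_reflect (fun j => ch j * w^(n-j)) (n+1)]
    refine Finset.sum_congr rfl fun k hk => ?_
    have hkn : k ≤ n := Nat.lt_succ_iff.mp (Finset.mem_range.mp hk)
    rw [show n + 1 - 1 - k = n - k by omega, show n - (n - k) = k by omega]
  rw [hrefl]
  have hterm : ∀ j ∈ Finset.range (n+1), ch j * w^(n-j) = (ch j * zk^j) * w^n := by
    intro j hj
    have hjn : j ≤ n := Nat.lt_succ_iff.mp (Finset.mem_range.mp hj)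
    have hw : zk^j * w^n = w^(n-j) := by
      rw [show n = j + (n - j) by omega, pow_add]
      rw [show j + (n-j) - j = n - j by omega]
      rw [← mul_assoc, ← mul_pow, hzw, one_pow, one_mul]
    rw [← hw]
    ring
  rw [Finset.sum_congr rfl hterm, ← Finset.sum_mul, hrootK, zero_mul, mul_zero]
end
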